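/- arXiv:0803.1659 — 8 statements merged into one kernel-verified Lean document; each statement's English description precedes it below -/
import Mathlib

section
/- Let A ⊆ ℂ be nonempty, connected and open, let F be a polynomial in variables {z_v : v ∈ V} that is A-nonvanishing, and let w ∈ V. If z_w is fixed at a complex value ξ in the closure of A, then the resulting polynomial in the variables {z_v : v ∈ V \ {w}} is A-nonvanishing. -/
/-!
Suppose `F` vanishes at some `x₀` with `x₀ w = ξ` and all other coordinates in `A`, and let `x`
be any point with `x w = ξ`. Since `A` is open, for small `s` and every `z ∈ A` the polynomial
`q_z(t) = F(x₀[w ↦ z] + t s (x - x₀))` has no zero in the open unit disc, so its roots have modulus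
at least `1` and `‖q_z(1)‖ ≤ 2 ^ d ‖q_z(0)‖` with `d` the total degree of `F`, uniformly in `z`.
Letting `z → ξ`, where `q_ξ(0) = F(x₀) = 0`, gives `F(x₀ + s (x - x₀)) = 0` for all small `s` (a
Hurwitz-type argument), and a polynomial in `s` vanishing near `0` vanishes at `s = 1`.
-/

open Polynomial

theorem Polynomial.norm_eval_le_two_pow_mul_norm_eval_zero {p : ℂ[X]}
    (hp : ∀ t : ℂ, ‖t‖ < 1 → p.eval t ≠ 0) {t : ℂ} (ht : ‖t‖ ≤ 1) :
    ‖p.eval t‖ ≤ 2 ^ p.natDegree * ‖p.eval 0‖ := by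
  have hsplit : p.Splits := IsAlgClosed.splits p
  have hnorm (s : ℂ) : ‖p.eval s‖ = ‖p.leadingCoeff‖ * (p.roots.map fun r => ‖s - r‖).prod := by
    rw [hsplit.eval_eq_prod_roots, norm_mul]
    exact congrArg _ ((map_multiset_prod (normHom (α := ℂ)) _).trans (by rw [Multiset.map_map]; rfl))
  have hroot : ∀ r ∈ p.roots, ‖t - r‖ ≤ 2 * ‖0 - r‖ := fun r hr => by
    have : 1 ≤ ‖r‖ := not_lt.1 fun h => hp r h (isRoot_of_mem_roots hr)
    calc ‖t - r‖ ≤ ‖t‖ + ‖r‖ := norm_sub_le t r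
      _ ≤ 2 * ‖0 - r‖ := by rw [zero_sub, norm_neg]; linarith
  calc ‖p.eval t‖ ≤ ‖p.leadingCoeff‖ * (p.roots.map fun r => 2 * ‖0 - r‖).prod := by
        rw [hnorm]
        gcongr
        exact Multiset.prod_map_le_prod_map₀ _ _ (fun _ _ => norm_nonneg _) hroot
    _ = 2 ^ p.roots.card * ‖p.eval 0‖ := by
        rw [hnorm, Multiset.prod_map_mul, Multiset.map_const', Multiset.prod_replicate]; ring
    _ ≤ 2 ^ p.natDegree * ‖p.eval 0‖ := by
        gcongr
        · norm_num
        · exact card_roots' p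

theorem Polynomial.eval_one_eq_zero_of_mem_closure {α : Type*} [TopologicalSpace α] {s : Set α}
    {p : α → ℂ[X]} {d : ℕ} (hd : ∀ x ∈ s, (p x).natDegree ≤ d)
    (hs : ∀ x ∈ s, ∀ t : ℂ, ‖t‖ < 1 → (p x).eval t ≠ 0)
    (hcont₀ : Continuous fun x => (p x).eval 0) (hcont₁ : Continuous fun x => (p x).eval 1)
    {x : α} (hx : x ∈ closure s) (h₀ : (p x).eval 0 = 0) : (p x).eval 1 = 0 := by
  have hbound : ∀ y ∈ s, ‖(p y).eval 1‖ ≤ 2 ^ d * ‖(p y).eval 0‖ := fun y hy =>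
    (norm_eval_le_two_pow_mul_norm_eval_zero (hs y hy) norm_one.le).trans
      (by gcongr; exacts [one_le_two, hd y hy])
  have := le_on_closure hbound hcont₁.norm.continuousOn
    (continuous_const.mul hcont₀.norm).continuousOn hx
  rw [h₀, norm_zero, mul_zero] at this
  exact norm_le_zero_iff.1 this

namespace MvPolynomial

variable {σ R : Type*} [CommSemiring R]

theorem natDegree_aeval_le_totalDegree {g : σ → R[X]} (hg : ∀ i, (g i).natDegree ≤ 1)
    (F : MvPolynomial σ R) : (aeval g F).natDegree ≤ F.totalDegree := by
  rw [aeval_def, eval₂_eq]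
  refine natDegree_sum_le_of_forall_le _ _ fun d hd => ?_
  calc _ ≤ (∏ i ∈ d.support, g i ^ d i).natDegree := natDegree_C_mul_le _ _
    _ ≤ ∑ i ∈ d.support, d i := le_trans (natDegree_prod_le _ _) (Finset.sum_le_sum fun i _ =>
          natDegree_pow_le.trans (by simpa using Nat.mul_le_mul_left (d i) (hg i)))
    _ ≤ F.totalDegree := le_totalDegree hd

noncomputable def restrictToLine (F : MvPolynomial σ R) (a b : σ → R) : R[X] :=
  aeval (fun i => Polynomial.C (b i) * Polynomial.X + Polynomial.C (a i)) F

theorem eval_restrictToLine (F : MvPolynomial σ R) (a b : σ → R) (t : R) :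
    (F.restrictToLine a b).eval t = eval (a + t • b) F := by
  induction F using MvPolynomial.induction_on with
  | C r => simp [restrictToLine]
  | add p q hp hq => simp_all [restrictToLine]
  | mul_X p i hp =>
    simp only [restrictToLine, map_mul, Polynomial.eval_mul, aeval_X, eval_X] at hp ⊢
    simp only [hp, Polynomial.eval_add, Polynomial.eval_mul, Polynomial.eval_C, Polynomial.eval_X,
      Pi.add_apply, Pi.smul_apply, smul_eq_mul]
    ring

theorem natDegree_restrictToLine_le (F : MvPolynomial σ R) (a b : σ → R) :
    (F.restrictToLine a b).natDegree ≤ F.totalDegree :=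
  natDegree_aeval_le_totalDegree (fun _ => natDegree_linear_le) F

theorem eval_add_eq_zero_of_eval_eq_zero {A : Set ℂ} {F : MvPolynomial σ ℂ}
    (hF : ∀ x : σ → ℂ, (∀ i, x i ∈ A) → eval x F ≠ 0) {w : σ} {x b : σ → ℂ}
    (hxw : x w ∈ closure A) (hbw : b w = 0)
    (hdisc : ∀ i ≠ w, ∀ t : ℂ, ‖t‖ < 1 → x i + t * b i ∈ A) (h₀ : eval x F = 0) :
    eval (x + b) F = 0 := by
  classical
  set p : ℂ → ℂ[X] := fun z => F.restrictToLine (Function.update x w z) b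
  have hcont (t : ℂ) : Continuous fun z => (p z).eval t := by
    simp only [p, eval_restrictToLine]
    exact (continuous_eval F).comp (by fun_prop)
  have hne : ∀ z ∈ A, ∀ t : ℂ, ‖t‖ < 1 → (p z).eval t ≠ 0 := by
    intro z hz t ht
    simp only [p, eval_restrictToLine]
    refine hF _ fun i => ?_
    by_cases hi : i = w
    · subst hi; simpa [hbw] using hz
    · simpa [hi] using hdisc i hi t ht
  have hp : p (x w) = F.restrictToLine x b := by simp [p]
  have := eval_one_eq_zero_of_mem_closure (fun z _ => natDegree_restrictToLine_le F _ b) hne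
    (hcont 0) (hcont 1) hxw (by simpa [hp, eval_restrictToLine] using h₀)
  simpa [hp, eval_restrictToLine] using this

theorem eval_eq_zero_of_apply_eq_of_eval_eq_zero [Finite σ] {A : Set ℂ} (hA : IsOpen A)
    {F : MvPolynomial σ ℂ} (hF : ∀ x : σ → ℂ, (∀ i, x i ∈ A) → eval x F ≠ 0) {w : σ}
    {x₀ x : σ → ℂ} (hx₀w : x₀ w ∈ closure A) (hx₀ : ∀ i ≠ w, x₀ i ∈ A) (hxw : x w = x₀ w)
    (h₀ : eval x₀ F = 0) : eval x F = 0 := by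
  set b := x - x₀
  have hnear : ∀ᶠ u in nhds (0 : ℂ), ∀ i ≠ w, x₀ i + u * b i ∈ A := by
    refine Filter.eventually_all.2 fun i => ?_
    by_cases hi : i = w
    · exact Filter.Eventually.of_forall fun _ h => absurd hi h
    · have : ContinuousAt (fun u : ℂ => x₀ i + u * b i) 0 := by fun_prop
      exact (this.eventually_mem (by simpa using hA.mem_nhds (hx₀ i hi))).mono fun _ h _ => h
  obtain ⟨ε, hε, hball⟩ := Metric.eventually_nhds_iff.1 hnear
  have hline : ∀ᶠ s in nhds (0 : ℂ), (F.restrictToLine x₀ b).eval s = 0 := by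
    refine Metric.eventually_nhds_iff.2 ⟨ε, hε, fun s hs => ?_⟩
    rw [eval_restrictToLine]
    refine eval_add_eq_zero_of_eval_eq_zero hF hx₀w (by simp [b, hxw]) (fun i hi t ht => ?_) h₀
    have : dist (t * s) 0 < ε := by
      rw [dist_zero_right, norm_mul]
      rw [dist_zero_right] at hs
      nlinarith [norm_nonneg t, norm_nonneg s]
    simpa [mul_assoc] using hball this i hi
  have hzero : F.restrictToLine x₀ b = 0 :=
    Polynomial.eq_zero_of_infinite_isRoot _ ((infinite_of_mem_nhds 0 hline).mono fun _ h => h)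
  simpa [eval_restrictToLine, b] using congrArg (Polynomial.eval 1) hzero

end MvPolynomial

open MvPolynomial

theorem specialize_nonvanishing_general
    {V : Type*} [Fintype V] (A : Set ℂ)
    (hAopen : IsOpen A)
    (F : MvPolynomial V ℂ) (w : V) (ξ : ℂ) (hξ : ξ ∈ closure A)
    (hF : (∀ x : V → ℂ, MvPolynomial.eval x F = 0) ∨
      (∀ x : V → ℂ, (∀ v, x v ∈ A) → MvPolynomial.eval x F ≠ 0)) :
    (∀ x : V → ℂ, x w = ξ → MvPolynomial.eval x F = 0) ∨
      (∀ x : V → ℂ, x w = ξ → (∀ v, v ≠ w → x v ∈ A) →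
        MvPolynomial.eval x F ≠ 0) := by
  rcases hF with hF | hF
  · exact Or.inl fun x _ => hF x
  refine or_iff_not_imp_right.2 fun h => ?_
  push Not at h
  obtain ⟨x₀, rfl, hx₀, h₀⟩ := h
  exact fun x hxw => eval_eq_zero_of_apply_eq_of_eval_eq_zero hAopen hF hξ hx₀ hxw h₀

/-- Lemma 2.2: specializing one variable of an `A`-nonvanishing polynomial to a
value in the closure of `A` yields an `A`-nonvanishing polynomial in the
remaining variables. -/
theorem specialize_nonvanishing
    {V : Type*} [Fintype V] (A : Set ℂ)
    (hA : A.Nonempty) (hAconn : IsConnected A) (hAopen : IsOpen A)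
    (F : MvPolynomial V ℂ) (w : V) (ξ : ℂ) (hξ : ξ ∈ closure A)
    (hF : (∀ x : V → ℂ, MvPolynomial.eval x F = 0) ∨
      (∀ x : V → ℂ, (∀ v, x v ∈ A) → MvPolynomial.eval x F ≠ 0)) :
    (∀ x : V → ℂ, x w = ξ → MvPolynomial.eval x F = 0) ∨
      (∀ x : V → ℂ, x w = ξ → (∀ v, v ≠ w → x v ∈ A) →
        MvPolynomial.eval x F ≠ 0) :=
  specialize_nonvanishing_general A hAopen F w ξ hξ hF
end

section
/- Let P(z) = Σ_j c_j z^j and K(z) = Σ_{j=0}^d C(d,j) u_j z^j be complex polynomials with deg P ≤ d, and let Q(z) = Σ_{j=0}^d u_j c_j z^j. Fix 0 ≤ α < π/2. If every zero of P lies outside the open sector {z ≠ 0 : |arg z| < π/2} and every zero of K lies outside the open sector {z ≠ 0 : |arg z| < π − α}, then either Q ≡ 0 or every zero of Q lies outside the open sector {z ≠ 0 : |arg z| < π/2 − α}. -/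
/-!
Fix `z` in the sector with `Q z = 0` and let `g w = w ^ d * K (-z / w)`. The hypotheses put the
zeros of `P` in the closed left half-plane and the nonzero zeros of `g` in the open right
half-plane, while `d! * Q z` is the apolarity pairing of `P` and `g` in formal degree `d`. This
pairing cannot vanish (Grace's theorem for the two half-planes), by induction on `d`: a zero `r` of
`P` is traded for the polar derivative of `g` with respect to `r` (Laguerre), a missing top
coefficient of `P` for the derivative of `g` (Gauss–Lucas), and a zero of `g` at `0` for the polar
derivative of `P` with respect to `0`. Since `Q ≠ 0`, some `u j * c j ≠ 0`, and this keeps the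
pairing from vanishing for degree reasons along the way.
-/

open Polynomial Real Finset ComplexConjugate
open scoped Nat

namespace Polynomial

section Semiring

variable {R : Type*} [Semiring R]

theorem coeff_sum_range_C_mul_X_pow {d k : ℕ} (hk : k ≤ d) (a : ℕ → R) :
    (∑ j ∈ range (d + 1), C (a j) * X ^ j).coeff k = a k := by
  simp only [finsetSum_coeff, coeff_C_mul_X_pow, sum_ite_eq, mem_range, Nat.lt_succ_of_le hk,
    if_true]

theorem natDegree_sum_range_C_mul_X_pow_le (d : ℕ) (a : ℕ → R) :
    (∑ j ∈ range (d + 1), C (a j) * X ^ j).natDegree ≤ d :=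
  natDegree_sum_le_of_forall_le _ _ fun _ hj =>
    (natDegree_C_mul_X_pow_le _ _).trans (Nat.lt_succ_iff.mp (mem_range.mp hj))

theorem natDegree_comp_C_mul_X_le (p : R[X]) (a : R) :
    (p.comp (C a * X)).natDegree ≤ p.natDegree :=
  natDegree_le_iff_coeff_eq_zero.mpr fun _ hi => by
    rw [comp_C_mul_X_coeff, coeff_eq_zero_of_natDegree_lt hi, zero_mul]

end Semiring

section Apolar

variable {R : Type*} [CommRing R]

noncomputable def polarDeriv (ℓ : ℕ) (r : R) (g : R[X]) : R[X] :=
  ℓ • g + (C r - X) * derivative g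

theorem coeff_polarDeriv (ℓ : ℕ) (r : R) (g : R[X]) (i : ℕ) :
    (polarDeriv ℓ r g).coeff i = ((ℓ : R) - i) * g.coeff i + r * (i + 1) * g.coeff (i + 1) := by
  rw [polarDeriv, sub_mul, coeff_add, coeff_sub, coeff_C_mul, coeff_derivative, coeff_smul,
    nsmul_eq_mul]
  cases i with
  | zero => simp [mul_comm X]
  | succ i => rw [coeff_X_mul, coeff_derivative]; push_cast; ring

theorem polarDeriv_eq_polarDeriv_zero_add (ℓ : ℕ) (r : R) (g : R[X]) :
    polarDeriv ℓ r g = polarDeriv ℓ 0 g + C r * derivative g := by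
  simp only [polarDeriv, map_zero]; ring

theorem natDegree_polarDeriv_le {m : ℕ} (r : R) {g : R[X]} (hg : g.natDegree ≤ m + 1) :
    (polarDeriv (m + 1) r g).natDegree ≤ m := by
  refine natDegree_le_iff_coeff_eq_zero.mpr fun i hi => ?_
  rw [coeff_polarDeriv, coeff_eq_zero_of_natDegree_lt (by omega : g.natDegree < i + 1)]
  rcases (Nat.succ_le_of_lt hi).eq_or_lt with rfl | hlt
  · push_cast; ring
  · rw [coeff_eq_zero_of_natDegree_lt (by omega)]; ring

/-- `n!` times the classical apolarity form `∑ (-1) ^ k * a k * b (n - k) / n.choose k` of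
`f = ∑ a k X ^ k` and `g = ∑ b k X ^ k`, viewed as polynomials of formal degree `n`. -/
noncomputable def apolar (n : ℕ) : R[X] →ₗ[R] R[X] →ₗ[R] R :=
  ∑ k ∈ range (n + 1), ((-1) ^ k * k ! * (n - k)! : R) •
    (LinearMap.mul R R).compl₁₂ (lcoeff R k) (lcoeff R (n - k))

theorem apolar_apply (n : ℕ) (f g : R[X]) :
    apolar n f g =
      ∑ k ∈ range (n + 1), (-1) ^ k * k ! * (n - k)! * f.coeff k * g.coeff (n - k) := by
  simp [apolar, LinearMap.sum_apply, mul_assoc]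

theorem apolar_comm (n : ℕ) (f g : R[X]) : apolar n f g = (-1) ^ n * apolar n g f := by
  rw [apolar_apply, apolar_apply, mul_sum]
  conv_rhs => rw [← sum_range_reflect]
  refine sum_congr rfl fun k hk => ?_
  have hk : k ≤ n := Nat.lt_succ_iff.mp (mem_range.mp hk)
  rw [show n + 1 - 1 - k = n - k by omega, Nat.sub_sub_self hk]
  have hsign : (-1 : R) ^ n * (-1) ^ (n - k) = (-1) ^ k := by
    rw [← pow_add, show n + (n - k) = k + 2 * (n - k) by omega, pow_add, pow_mul]; simp
  linear_combination (k ! * (n - k)! * f.coeff k * g.coeff (n - k) : R) * hsign.symm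

theorem apolar_derivative_right {m : ℕ} {f : R[X]} (hf : f.coeff (m + 1) = 0) (g : R[X]) :
    apolar m f (derivative g) = apolar (m + 1) f g := by
  rw [apolar_apply, apolar_apply, sum_range_succ _ (m + 1), hf]
  simp only [mul_zero, zero_mul, add_zero]
  refine sum_congr rfl fun k hk => ?_
  have hk : k ≤ m := Nat.lt_succ_iff.mp (mem_range.mp hk)
  rw [coeff_derivative, show m + 1 - k = m - k + 1 by omega, Nat.factorial_succ]
  push_cast; ring

theorem apolar_X_mul_right (m : ℕ) (f g : R[X]) :
    apolar (m + 1) f (X * g) = apolar m (polarDeriv (m + 1) 0 f) g := by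
  rw [apolar_apply, apolar_apply, sum_range_succ, Nat.sub_self, mul_comm X, coeff_mul_X_zero]
  simp only [mul_zero, add_zero]
  refine sum_congr rfl fun k hk => ?_
  have hk : k ≤ m := Nat.lt_succ_iff.mp (mem_range.mp hk)
  rw [coeff_polarDeriv, show m + 1 - k = m - k + 1 by omega, coeff_mul_X, Nat.factorial_succ]
  push_cast [hk]; ring

theorem apolar_X_mul_left (m : ℕ) (f g : R[X]) :
    apolar (m + 1) (X * f) g = -apolar m f (polarDeriv (m + 1) 0 g) := by
  have hsign : (-1 : R) ^ m * (-1) ^ m = 1 := by rw [← mul_pow]; simp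
  rw [apolar_comm, apolar_X_mul_right, apolar_comm m, pow_succ]
  linear_combination (-apolar m f (polarDeriv (m + 1) 0 g)) * hsign

theorem apolar_X_sub_C_mul_left {m : ℕ} {f : R[X]} (hf : f.coeff (m + 1) = 0) (r : R)
    (g : R[X]) : apolar (m + 1) ((X - C r) * f) g = -apolar m f (polarDeriv (m + 1) r g) := by
  rw [polarDeriv_eq_polarDeriv_zero_add, sub_mul, ← smul_eq_C_mul, ← smul_eq_C_mul, map_sub,
    LinearMap.sub_apply, apolar_X_mul_left, map_add, map_smul, LinearMap.smul_apply, map_smul,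
    apolar_derivative_right hf, smul_eq_mul]
  ring

theorem apolar_reflect_comp_neg_mul_X (d : ℕ) (f K : R[X]) (z : R) :
    apolar d f ((K.comp (C (-z) * X)).reflect d) =
      ∑ k ∈ range (d + 1), k ! * (d - k)! * f.coeff k * K.coeff k * z ^ k := by
  rw [apolar_apply]
  refine sum_congr rfl fun k hk => ?_
  rw [coeff_reflect, revAt_le (Nat.sub_le d k),
    Nat.sub_sub_self (Nat.lt_succ_iff.mp (mem_range.mp hk)), comp_C_mul_X_coeff, neg_pow]
  have hsign : (-1 : R) ^ k * (-1) ^ k = 1 := by rw [← mul_pow]; simp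
  linear_combination (k ! * (d - k)! * f.coeff k * K.coeff k * z ^ k : R) * hsign

theorem apolar_reflect_comp_neg_mul_X_eq_factorial_mul_eval (d : ℕ) (c u : ℕ → R) (z : R) :
    apolar d (∑ j ∈ range (d + 1), C (c j) * X ^ j)
        (((∑ j ∈ range (d + 1), C ((d.choose j : R) * u j) * X ^ j).comp (C (-z) * X)).reflect d) =
      (d ! : R) * (∑ j ∈ range (d + 1), C (u j * c j) * X ^ j).eval z := by
  rw [apolar_reflect_comp_neg_mul_X, eval_finsetSum, mul_sum]
  refine sum_congr rfl fun k hk => ?_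
  have hk : k ≤ d := Nat.lt_succ_iff.mp (mem_range.mp hk)
  rw [coeff_sum_range_C_mul_X_pow hk, coeff_sum_range_C_mul_X_pow hk, eval_mul, eval_C, eval_pow,
    eval_X, ← Nat.choose_mul_factorial_mul_factorial hk]
  push_cast; ring

end Apolar

theorem eval_reflect_eq_zero_iff {F : Type*} [Field F] {N : ℕ} {p : F[X]}
    (hp : p.natDegree ≤ N) {w : F} (hw : w ≠ 0) :
    (p.reflect N).eval w = 0 ↔ p.eval w⁻¹ = 0 := by
  let := invertibleOfNonzero (inv_ne_zero hw)
  simpa [invOf_eq_inv] using eval₂_reflect_eq_zero_iff (RingHom.id F) w⁻¹ N p hp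

end Polynomial

namespace Complex

theorem re_multiset_sum (s : Multiset ℂ) : s.sum.re = (s.map re).sum :=
  map_multiset_sum reAddGroupHom s

theorem mul_normSq_multiset_sum_lt {s : Multiset ℂ} (hs : s ≠ 0) {c : ℝ} (hc : 0 ≤ c)
    (h : ∀ v ∈ s, c * normSq v < v.re) : c * normSq s.sum < Multiset.card s * s.sum.re := by
  have hcard : (0 : ℝ) < Multiset.card s := by exact_mod_cast Multiset.card_pos.mpr hs
  rcases hc.eq_or_lt with rfl | hc
  · have hre : 0 < s.sum.re := by
      rw [re_multiset_sum]
      simpa using Multiset.sum_lt_sum_of_nonempty (f := fun _ => (0 : ℝ)) hs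
        fun v hv => by simpa using h v hv
    simpa using mul_pos hcard hre
  -- each `v` lies in the open disc `‖1 - 2 c v‖ < 1`, and so does the mean of `s`
  have hdisc : ∀ v ∈ s, ‖1 - 2 * c * v‖ < 1 := by
    intro v hv
    have := h v hv
    rw [← sq_lt_one_iff₀ (norm_nonneg _), Complex.sq_norm, normSq_apply]
    simp only [sub_re, one_re, mul_re, re_ofNat, ofReal_re, im_ofNat, ofReal_im, sub_im, one_im,
      mul_im, normSq_apply] at *
    nlinarith
  have hsum : ‖(Multiset.card s : ℂ) - 2 * c * s.sum‖ < Multiset.card s := by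
    have : (Multiset.card s : ℂ) - 2 * c * s.sum = (s.map fun v : ℂ => 1 - 2 * c * v).sum := by
      rw [Multiset.sum_map_sub, Multiset.sum_map_mul_left, Multiset.map_id', Multiset.map_const',
        Multiset.sum_replicate, nsmul_one]
    rw [this]
    refine (norm_multiset_sum_le _).trans_lt ?_
    simpa [Multiset.map_map] using Multiset.sum_lt_sum_of_nonempty hs hdisc
  rw [← sq_lt_sq₀ (norm_nonneg _) hcard.le, Complex.sq_norm, normSq_apply] at hsum
  simp only [sub_re, natCast_re, mul_re, re_ofNat, ofReal_re, im_ofNat, ofReal_im, sub_im,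
    natCast_im, mul_im] at hsum
  rw [normSq_apply]
  nlinarith

theorem abs_arg_mul_lt {a b : ℂ} (ha : a ≠ 0) (hb : b ≠ 0) {s t : ℝ} (has : |a.arg| < s)
    (hbt : |b.arg| ≤ t) (hst : s + t ≤ π) : |(a * b).arg| < s + t := by
  have h := abs_lt.mp ((abs_add_le _ _).trans_lt (add_lt_add_of_lt_of_le has hbt))
  rw [(arg_mul_eq_add_arg_iff ha hb).mpr ⟨by linarith, by linarith⟩]
  exact abs_lt.mpr h

theorem re_neg_mul_div_sub_pos {z β : ℂ} (hz : 0 < z.re) (hβ : β.re ≤ 0) (hβ0 : β ≠ 0) :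
    0 < (-(β * z) / (z - β)).re := by
  have hz0 : z ≠ 0 := fun h0 => by simp [h0] at hz
  have hpos : 0 < (z⁻¹ - β⁻¹).re := by
    rw [sub_re, inv_re, inv_re, sub_pos]
    exact (div_nonpos_of_nonpos_of_nonneg hβ (normSq_nonneg β)).trans_lt
      (div_pos hz (normSq_pos.mpr hz0))
  have hinv : -(β * z) / (z - β) = (z⁻¹ - β⁻¹)⁻¹ := by
    rw [inv_sub_inv hz0 hβ0, inv_div, ← neg_sub z β, div_neg, mul_comm, neg_div]
  rw [hinv, inv_re]
  exact div_pos hpos (normSq_pos.mpr fun h0 => by simp [h0] at hpos)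

theorem mul_normSq_inv_lt_re_inv {q : ℂ} {c : ℝ} (hc : 0 ≤ c) (hq : c < q.re) :
    c * normSq q⁻¹ < q⁻¹.re := by
  have hq0 : q ≠ 0 := fun h0 => by simp [h0] at hq; linarith
  rw [normSq_inv, inv_re, div_eq_mul_inv, ← sub_pos, ← sub_mul]
  exact mul_pos (by linarith) (inv_pos.mpr (normSq_pos.mpr hq0))

end Complex

namespace Polynomial

theorem exists_mem_roots_ne_zero {R : Type*} [CommRing R] [IsDomain R] {f : R[X]} {k : ℕ}
    (hk : k < f.roots.card) (hfk : f.coeff k ≠ 0) : ∃ β ∈ f.roots, β ≠ 0 := by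
  classical
  by_contra! hall
  have hcount := Multiset.count_eq_card.mpr fun x hx => (hall x hx).symm
  rw [count_roots, rootMultiplicity_eq_natTrailingDegree'] at hcount
  exact (natTrailingDegree_le_of_ne_zero hfk).not_gt (hcount ▸ hk)

theorem eval_polarDeriv_eq_eval_mul_sum {g : ℂ[X]} {z : ℂ} (hz : g.eval z ≠ 0) (ℓ : ℕ) (r : ℂ) :
    (polarDeriv ℓ r g).eval z =
      g.eval z * (ℓ + (r - z) * (g.roots.map fun β => 1 / (z - β)).sum) := by
  rw [polarDeriv, eval_add, eval_mul, eval_smul,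
    (IsAlgClosed.splits g).eval_derivative_eq_eval_mul_sum hz]
  simp only [nsmul_eq_mul, eval_sub, eval_C, eval_X]
  ring

theorem eval_derivative_ne_zero_of_re_nonpos {g : ℂ[X]}
    (hg : ∀ z : ℂ, z.re ≤ 0 → g.eval z ≠ 0) (hdeg : 0 < g.natDegree) {z : ℂ} (hz : z.re ≤ 0) :
    (derivative g).eval z ≠ 0 := by
  intro hz0
  have hg' : derivative g ≠ 0 := mt derivative_eq_zero.mp hdeg.ne'
  have hroots : g.rootSet ℂ ⊆ {w | 0 < w.re} := fun w hw =>
    not_le.mp fun hw' => hg w hw' (by simpa using (mem_rootSet.mp hw).2)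
  have := convexHull_min hroots (convex_halfSpace_re_gt 0)
    (rootSet_derivative_subset_convexHull_rootSet (natDegree_pos_iff_degree_pos.mp hdeg)
      (mem_rootSet.mpr ⟨hg', by simpa using hz0⟩))
  exact (not_lt.mpr hz) this

theorem eval_polarDeriv_ne_zero_of_re_nonpos {ℓ : ℕ} (hℓ : ℓ ≠ 0) {g : ℂ[X]}
    (hdeg : g.natDegree ≤ ℓ) (hg : ∀ z : ℂ, z.re ≤ 0 → g.eval z ≠ 0) {r z : ℂ} (hr : r.re ≤ 0)
    (hz : z.re ≤ 0) : (polarDeriv ℓ r g).eval z ≠ 0 := by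
  rw [eval_polarDeriv_eq_eval_mul_sum (hg z hz)]
  refine mul_ne_zero (hg z hz) fun h => ?_
  set V := (g.roots.map fun β => (β - z)⁻¹).sum
  have hS : (g.roots.map fun β => 1 / (z - β)).sum = -V := by
    rw [← Multiset.sum_map_neg]
    exact congrArg _ (Multiset.map_congr rfl fun β _ => by rw [one_div, ← inv_neg, neg_sub])
  rw [hS] at h
  by_cases hroots : g.roots = 0
  · simp only [V, hroots, Multiset.map_zero, Multiset.sum_zero, neg_zero, mul_zero,
      add_zero, Nat.cast_eq_zero] at h
    exact hℓ h
  have hdisc : ∀ v ∈ g.roots.map fun β => (β - z)⁻¹, -z.re * Complex.normSq v < v.re := by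
    simp only [Multiset.mem_map, forall_exists_index, and_imp]
    rintro _ β hβ rfl
    have hβ : 0 < β.re := not_le.mp fun h' => hg β h' (isRoot_of_mem_roots hβ)
    exact Complex.mul_normSq_inv_lt_re_inv (neg_nonneg.mpr hz) (by simp; linarith)
  have hmean := Complex.mul_normSq_multiset_sum_lt (by simpa using hroots) (neg_nonneg.mpr hz)
    hdisc
  rw [Multiset.card_map] at hmean
  have hcard : (g.roots.card : ℝ) ≤ ℓ := by exact_mod_cast (card_roots' g).trans hdeg
  have hkey : (ℓ : ℝ) * V.re = (r.re - z.re) * Complex.normSq V := by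
    have := congrArg (fun w => (w * conj V).re) (by linear_combination h : (ℓ : ℂ) = (r - z) * V)
    simpa [mul_assoc, Complex.mul_conj, Complex.re_mul_ofReal] using this
  have hV : 0 < V.re := by
    nlinarith [mul_nonneg (neg_nonneg.mpr hz) (Complex.normSq_nonneg V)]
  have : (ℓ : ℝ) * V.re < ℓ * V.re := calc
    (ℓ : ℝ) * V.re = (r.re - z.re) * Complex.normSq V := hkey
    _ ≤ -z.re * Complex.normSq V :=
      mul_le_mul_of_nonneg_right (by linarith) (Complex.normSq_nonneg V)
    _ < g.roots.card * V.re := hmean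
    _ ≤ ℓ * V.re := mul_le_mul_of_nonneg_right hcard hV.le
  exact lt_irrefl _ this

theorem eval_polarDeriv_zero_ne_zero_of_re_pos {ℓ : ℕ} {f : ℂ[X]} (hdeg : f.natDegree ≤ ℓ)
    (hf : ∀ z : ℂ, 0 < z.re → f.eval z ≠ 0) {k : ℕ} (hk : k < ℓ) (hfk : f.coeff k ≠ 0) {z : ℂ}
    (hz : 0 < z.re) : (polarDeriv ℓ 0 f).eval z ≠ 0 := by
  rw [eval_polarDeriv_eq_eval_mul_sum (hf z hz)]
  refine mul_ne_zero (hf z hz) fun h => ?_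
  have hroot : ∀ β ∈ f.roots, β.re ≤ 0 := fun β hβ =>
    not_lt.mp fun h' => hf β h' (isRoot_of_mem_roots hβ)
  set T : ℂ → ℂ := fun β => -(β * z) / (z - β)
  have hT : ∀ β ∈ f.roots, 0 ≤ (T β).re := fun β hβ => by
    rcases eq_or_ne β 0 with rfl | hβ0
    · simp [T]
    · exact (Complex.re_neg_mul_div_sub_pos hz (hroot β hβ) hβ0).le
  have hsplit : z * (ℓ + (0 - z) * (f.roots.map fun β => 1 / (z - β)).sum) =
      (ℓ - f.roots.card) * z + (f.roots.map T).sum := by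
    have : ∀ β ∈ f.roots, T β = z - z * z * (1 / (z - β)) := fun β hβ => by
      have : z - β ≠ 0 := sub_ne_zero.mpr fun h0 => by linarith [h0 ▸ hroot β hβ]
      simp only [T]; field_simp; ring
    rw [Multiset.map_congr rfl this, Multiset.sum_map_sub, Multiset.sum_map_mul_left,
      Multiset.map_const', Multiset.sum_replicate, nsmul_eq_mul]
    ring
  have hre := congrArg Complex.re hsplit
  rw [h, mul_zero, Complex.zero_re, Complex.add_re, Complex.re_multiset_sum, Multiset.map_map,
    show (((ℓ : ℂ) - f.roots.card) * z).re = ((ℓ : ℝ) - f.roots.card) * z.re by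
      simp [Complex.mul_re]] at hre
  have hsum : 0 ≤ (f.roots.map (Complex.re ∘ T)).sum :=
    Multiset.sum_nonneg fun x hx => by
      obtain ⟨β, hβ, rfl⟩ := Multiset.mem_map.mp hx
      exact hT β hβ
  rcases ((card_roots' f).trans hdeg).lt_or_eq with hlt | heq
  · have : (0 : ℝ) < (ℓ : ℝ) - f.roots.card := sub_pos.mpr (by exact_mod_cast hlt)
    nlinarith
  obtain ⟨β, hβ, hβ0⟩ := exists_mem_roots_ne_zero (heq ▸ hk) hfk
  have : 0 < (f.roots.map (Complex.re ∘ T)).sum := by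
    simpa using Multiset.sum_lt_sum (f := fun _ => (0 : ℝ)) (g := Complex.re ∘ T)
      (fun x hx => hT x hx) ⟨β, hβ, Complex.re_neg_mul_div_sub_pos hz (hroot β hβ) hβ0⟩
  rw [heq, sub_self, zero_mul] at hre
  linarith

/-- The last condition excludes pairs such as `f = 1`, `g = X ^ n` whose pairing vanishes for
degree reasons alone. -/
structure GracePair (n : ℕ) (f g : ℂ[X]) : Prop where
  eval_left_ne_zero : ∀ z : ℂ, 0 < z.re → f.eval z ≠ 0
  eval_right_ne_zero : ∀ z : ℂ, z.re ≤ 0 → z ≠ 0 → g.eval z ≠ 0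
  natDegree_left_le : f.natDegree ≤ n
  natDegree_right_le : g.natDegree ≤ n
  exists_coeff_ne_zero : ∃ k ≤ n, f.coeff k ≠ 0 ∧ g.coeff (n - k) ≠ 0

namespace GracePair

variable {m : ℕ} {f g : ℂ[X]}

theorem eval_right_ne_zero_of_coeff_zero_ne_zero (h : GracePair m f g) (hg0 : g.coeff 0 ≠ 0) {z : ℂ}
    (hz : z.re ≤ 0) : g.eval z ≠ 0 := by
  rcases eq_or_ne z 0 with rfl | hz0
  · rwa [← coeff_zero_eq_eval_zero]
  · exact h.eval_right_ne_zero z hz hz0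

theorem polarDeriv_zero_divX (h : GracePair (m + 1) f g) (hg0 : g.coeff 0 = 0) :
    GracePair m (polarDeriv (m + 1) 0 f) g.divX := by
  obtain ⟨k, -, hfk, hgk⟩ := h.exists_coeff_ne_zero
  have hkm : k ≤ m := by
    by_contra! hkm
    rw [show m + 1 - k = 0 by omega] at hgk
    exact hgk hg0
  have hX : X * g.divX = g := by simpa [hg0] using X_mul_divX_add g
  refine ⟨fun z hz => eval_polarDeriv_zero_ne_zero_of_re_pos h.natDegree_left_le
      h.eval_left_ne_zero (by omega) hfk hz, fun z hz hz0 h0 => ?_,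
    natDegree_polarDeriv_le 0 h.natDegree_left_le, ?_, k, hkm, ?_, ?_⟩
  · exact h.eval_right_ne_zero z hz hz0 (by rw [← hX, eval_mul, h0, mul_zero])
  · rw [natDegree_divX_eq_natDegree_tsub_one]; have := h.natDegree_right_le; omega
  · rw [coeff_polarDeriv, zero_mul, zero_mul, add_zero]
    refine mul_ne_zero (sub_ne_zero.mpr ?_) hfk
    exact_mod_cast (by omega : m + 1 ≠ k)
  · rwa [coeff_divX, show m - k + 1 = m + 1 - k by omega]

theorem derivative_right (h : GracePair (m + 1) f g) (hg0 : g.coeff 0 ≠ 0)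
    (hf0 : f.coeff (m + 1) = 0) : GracePair m f (derivative g) := by
  obtain ⟨k, hk, hfk, hgk⟩ := h.exists_coeff_ne_zero
  have hkm : k ≤ m := by
    by_contra! hkm
    rw [show k = m + 1 by omega] at hfk
    exact hfk hf0
  refine ⟨h.eval_left_ne_zero, fun z hz _ => eval_derivative_ne_zero_of_re_nonpos
      (fun w hw => h.eval_right_ne_zero_of_coeff_zero_ne_zero hg0 hw) ?_ hz, ?_,
    (natDegree_derivative_le g).trans (by have := h.natDegree_right_le; omega), k, hkm, hfk, ?_⟩
  · exact Nat.lt_of_lt_of_le (by omega) (le_natDegree_of_ne_zero hgk)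
  · refine natDegree_le_iff_coeff_eq_zero.mpr fun i hi => ?_
    rcases (Nat.succ_le_of_lt hi).eq_or_lt with rfl | hlt
    · exact hf0
    · exact coeff_eq_zero_of_natDegree_lt (h.natDegree_left_le.trans_lt hlt)
  · rw [coeff_derivative, show m - k + 1 = m + 1 - k by omega]
    exact mul_ne_zero hgk (by norm_cast)

theorem divByMonic_polarDeriv (h : GracePair (m + 1) f g) (hg0 : g.coeff 0 ≠ 0)
    (hf0 : f.coeff (m + 1) ≠ 0) {r : ℂ} (hr : f.IsRoot r) :
    GracePair m (f /ₘ (X - C r)) (polarDeriv (m + 1) r g) := by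
  have hre : r.re ≤ 0 := not_lt.mp fun h' => h.eval_left_ne_zero r h' hr
  have hfac : (X - C r) * (f /ₘ (X - C r)) = f := mul_divByMonic_eq_iff_isRoot.mpr hr
  have hdeg : (f /ₘ (X - C r)).natDegree = m := by
    rw [natDegree_divByMonic _ (monic_X_sub_C r), natDegree_X_sub_C,
      le_antisymm h.natDegree_left_le (le_natDegree_of_ne_zero hf0)]; rfl
  have hG : ∀ z : ℂ, z.re ≤ 0 → (polarDeriv (m + 1) r g).eval z ≠ 0 := fun z hz =>
    eval_polarDeriv_ne_zero_of_re_nonpos m.succ_ne_zero h.natDegree_right_le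
      (fun w hw => h.eval_right_ne_zero_of_coeff_zero_ne_zero hg0 hw) hre hz
  refine ⟨fun z hz h0 => h.eval_left_ne_zero z hz (by rw [← hfac, eval_mul, h0, mul_zero]),
    fun z hz _ => hG z hz, hdeg.le, natDegree_polarDeriv_le r h.natDegree_right_le, m, le_rfl,
    ?_, ?_⟩
  · rw [← hdeg, ← leadingCoeff, Ne, leadingCoeff_eq_zero]
    exact fun h0 => hf0 (by rw [← hfac, h0, mul_zero, coeff_zero])
  · rw [Nat.sub_self, coeff_zero_eq_eval_zero]
    exact hG 0 le_rfl

theorem apolar_ne_zero {n : ℕ} {f g : ℂ[X]} (h : GracePair n f g) : apolar n f g ≠ 0 := by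
  induction n generalizing f g with
  | zero =>
    obtain ⟨k, hk, hfk, hgk⟩ := h.exists_coeff_ne_zero
    obtain rfl : k = 0 := Nat.le_zero.mp hk
    simpa [apolar_apply] using mul_ne_zero hfk hgk
  | succ m ih =>
    by_cases hg0 : g.coeff 0 = 0
    · have hX : X * g.divX = g := by simpa [hg0] using X_mul_divX_add g
      rw [← hX, apolar_X_mul_right]
      exact ih (h.polarDeriv_zero_divX hg0)
    by_cases hf0 : f.coeff (m + 1) = 0
    · rw [← apolar_derivative_right hf0]
      exact ih (h.derivative_right hg0 hf0)
    have hdeg : 0 < f.degree := natDegree_pos_iff_degree_pos.mp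
      (Nat.lt_of_lt_of_le m.succ_pos (le_natDegree_of_ne_zero hf0))
    obtain ⟨r, hr⟩ := Complex.exists_root hdeg
    have h' := h.divByMonic_polarDeriv hg0 hf0 hr
    rw [← mul_divByMonic_eq_iff_isRoot.mpr hr, apolar_X_sub_C_mul_left
      (coeff_eq_zero_of_natDegree_lt (h'.natDegree_left_le.trans_lt m.lt_succ_self)), neg_ne_zero]
    exact ih h'

end GracePair

-- `(K.comp (C (-z) * X)).reflect d` is `w ↦ w ^ d * K (-z / w)`
theorem eval_reflect_comp_neg_mul_X_ne_zero {d : ℕ} {K : ℂ[X]} (hKd : K.natDegree ≤ d) {α : ℝ}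
    (hα : 0 ≤ α) (hK : ∀ z : ℂ, z ≠ 0 → |z.arg| < π - α → K.eval z ≠ 0) {z : ℂ} (hz0 : z ≠ 0)
    (hz : |z.arg| < π / 2 - α) {w : ℂ} (hw : w.re ≤ 0) (hw0 : w ≠ 0) :
    ((K.comp (C (-z) * X)).reflect d).eval w ≠ 0 := by
  rw [Ne, eval_reflect_eq_zero_iff ((natDegree_comp_C_mul_X_le K _).trans hKd) hw0, eval_comp,
    eval_mul, eval_C, eval_X, show -z * w⁻¹ = z * -w⁻¹ by ring]
  have hw' : |(-w⁻¹).arg| ≤ π / 2 := Complex.abs_arg_le_pi_div_two_iff.mpr (by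
    rw [Complex.neg_re, Complex.inv_re]
    exact neg_nonneg.mpr (div_nonpos_of_nonpos_of_nonneg hw (Complex.normSq_nonneg w)))
  have hw'0 : -w⁻¹ ≠ 0 := neg_ne_zero.mpr (inv_ne_zero hw0)
  exact hK _ (mul_ne_zero hz0 hw'0)
    ((Complex.abs_arg_mul_lt hz0 hw'0 hz hw' (by linarith)).trans_eq (by ring))

end Polynomial

theorem schur_szego_sector_general
    (d : ℕ) (c u : ℕ → ℂ) (α : ℝ) (hα0 : 0 ≤ α)
    (P : Polynomial ℂ) (hP : P = ∑ j ∈ Finset.range (d + 1), Polynomial.C (c j) * Polynomial.X ^ j)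
    (K : Polynomial ℂ) (hK : K = ∑ j ∈ Finset.range (d + 1),
      Polynomial.C ((d.choose j : ℂ) * u j) * Polynomial.X ^ j)
    (Q : Polynomial ℂ) (hQ : Q = ∑ j ∈ Finset.range (d + 1),
      Polynomial.C (u j * c j) * Polynomial.X ^ j)
    (hPnv : ∀ z : ℂ, z ≠ 0 → |z.arg| < π / 2 → P.eval z ≠ 0)
    (hKnv : ∀ z : ℂ, z ≠ 0 → |z.arg| < π - α → K.eval z ≠ 0) :
    Q = 0 ∨ ∀ z : ℂ, z ≠ 0 → |z.arg| < π / 2 - α → Q.eval z ≠ 0 := by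
  refine or_iff_not_imp_left.mpr fun hQ0 z hz0 hz hQz => ?_
  obtain ⟨j, hj, hj0⟩ : ∃ j ≤ d, u j * c j ≠ 0 := by
    by_contra! h
    exact hQ0 (hQ ▸ sum_eq_zero fun j hj => by
      rw [h j (Nat.lt_succ_iff.mp (mem_range.mp hj)), map_zero, zero_mul])
  have hKd : K.natDegree ≤ d := hK ▸ natDegree_sum_range_C_mul_X_pow_le d _
  refine GracePair.apolar_ne_zero (n := d) (f := P) (g := (K.comp (C (-z) * X)).reflect d)
    ⟨fun w hw => hPnv w (fun h => by simp [h] at hw)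
      (Complex.abs_arg_lt_pi_div_two_iff.mpr (Or.inl hw)),
    fun w hw hw0 => eval_reflect_comp_neg_mul_X_ne_zero hKd hα0 hKnv hz0 hz hw hw0,
    hP ▸ natDegree_sum_range_C_mul_X_pow_le d _,
    natDegree_reflect_le.trans (max_le le_rfl ((natDegree_comp_C_mul_X_le K _).trans hKd)),
    j, hj, ?_, ?_⟩ ?_
  · rw [hP, coeff_sum_range_C_mul_X_pow hj]
    exact right_ne_zero_of_mul hj0
  · rw [coeff_reflect, revAt_le (Nat.sub_le d j), Nat.sub_sub_self hj, comp_C_mul_X_coeff, hK,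
      coeff_sum_range_C_mul_X_pow hj]
    exact mul_ne_zero (mul_ne_zero (by exact_mod_cast (Nat.choose_pos hj).ne')
      (left_ne_zero_of_mul hj0)) (pow_ne_zero _ (neg_ne_zero.mpr hz0))
  rw [hP, hK, apolar_reflect_comp_neg_mul_X_eq_factorial_mul_eval, ← hQ, hQz, mul_zero]

/-- Schur–Szegő composition, sector version (Proposition 2.5(a)). -/
theorem schur_szego_sector
    (d : ℕ) (c u : ℕ → ℂ) (α : ℝ) (hα0 : 0 ≤ α) (hα : α < π / 2)
    (P : Polynomial ℂ) (hP : P = ∑ j ∈ Finset.range (d + 1), Polynomial.C (c j) * Polynomial.X ^ j)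
    (K : Polynomial ℂ) (hK : K = ∑ j ∈ Finset.range (d + 1),
      Polynomial.C ((d.choose j : ℂ) * u j) * Polynomial.X ^ j)
    (Q : Polynomial ℂ) (hQ : Q = ∑ j ∈ Finset.range (d + 1),
      Polynomial.C (u j * c j) * Polynomial.X ^ j)
    (hPnv : ∀ z : ℂ, z ≠ 0 → |z.arg| < π / 2 → P.eval z ≠ 0)
    (hKnv : ∀ z : ℂ, z ≠ 0 → |z.arg| < π - α → K.eval z ≠ 0) :
    Q = 0 ∨ ∀ z : ℂ, z ≠ 0 → |z.arg| < π / 2 - α → Q.eval z ≠ 0 :=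
  schur_szego_sector_general d c u α hα0 P hP K hK Q hQ hPnv hKnv
end

section
/- Let G = (V,E) be a finite graph with complex edge weights satisfying |λ_e| ≤ λ_max for all e, and suppose each key polynomial K_v(z) = Σ_{j=0}^{deg(G,v)} C(deg(G,v),j) u_j^{(v)} z^j has no zeros in the open disk {|z| < κ}, κ > 0. Then Z(G,λ,u;x) = Σ_{H⊆E} λ^H (Π_v u_{deg(H,v)}^{(v)}) Π_v x_v^{deg(H,v)} is either identically zero or nonzero whenever all |x_v| < κ/λ_max^{1/2}. -/
/-!
Put `w e = λ_e x_a x_b` for an edge `e = ab`, so `‖w e‖ < κ²`, and delete the edges one at a time.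
Removing `e` writes `Z` as `A + D w_e`, where `A + B y + C y' + D y y'` is the partition function
of the smaller graph with the vertex weights at `a` and `b` changed to `u_j + y u_{j+1}` and
`u_j + y' u_{j+1}`; by Asano contraction it suffices that this be nonzero whenever `|y|, |y'| < κ`.
That change of weights turns the key polynomial of degree `d + 1` into a multiple of its polar
derivative with respect to `y`, which by Laguerre's theorem still has no zeros in the disk, so
induction on the number of edges applies.
-/

open Finset Polynomial

theorem Convex.inv_card_smul_multiset_sum_mem {E : Type*} [AddCommGroup E] [Module ℝ E]
    {s : Set E} (hs : Convex ℝ s) {M : Multiset E} (hM : M ≠ 0) (hMs : ∀ x ∈ M, x ∈ s) :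
    (Multiset.card M : ℝ)⁻¹ • M.sum ∈ s := by
  classical
  have hcard : (Multiset.card M : ℝ) ≠ 0 := by simpa using hM
  rw [Multiset.sum_eq_sum_coe, Finset.smul_sum]
  refine hs.sum_mem (fun _ _ => by positivity) ?_ (fun x _ => hMs x Multiset.coe_mem)
  simp [Finset.card_univ, Multiset.card_coe, hcard]

theorem exists_quadratic_root_norm_mul_self_le {a b c : ℂ} (ha : a ≠ 0) :
    ∃ t : ℂ, a * (t * t) + b * t + c = 0 ∧ ‖t‖ * ‖t‖ ≤ ‖c / a‖ := by
  obtain ⟨s, hs⟩ := IsAlgClosed.exists_eq_mul_self (discrim a b c)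
  have hroot := quadratic_eq_zero_iff ha hs
  set t₁ := (-b + s) / (2 * a)
  set t₂ := (-b - s) / (2 * a)
  have hprod : t₁ * t₂ = c / a := by
    simp only [t₁, t₂]
    field_simp
    rw [discrim] at hs
    linear_combination hs
  rcases le_total ‖t₁‖ ‖t₂‖ with h | h
  · refine ⟨t₁, (hroot t₁).2 (Or.inl rfl), ?_⟩
    rw [← hprod, norm_mul]
    exact mul_le_mul_of_nonneg_left h (norm_nonneg _)
  · refine ⟨t₂, (hroot t₂).2 (Or.inr rfl), ?_⟩
    rw [← hprod, norm_mul]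
    exact mul_le_mul_of_nonneg_right h (norm_nonneg _)

theorem asano_contraction {A B C D w : ℂ} {κ : ℝ} (hκ : 0 < κ)
    (h : ∀ y y' : ℂ, ‖y‖ < κ → ‖y'‖ < κ → A + B * y + C * y' + D * (y * y') ≠ 0)
    (hw : ‖w‖ < κ ^ 2) : A + D * w ≠ 0 := by
  intro hA
  by_cases hD : D = 0
  · exact h 0 0 (by simpa using hκ) (by simpa using hκ) (by simpa [hD] using hA)
  obtain ⟨t, ht, htκ⟩ := exists_quadratic_root_norm_mul_self_le (a := D) (b := B + C) (c := A) hD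
  have hAD : A / D = -w := by field_simp; linear_combination hA
  rw [hAD, norm_neg] at htκ
  have htlt : ‖t‖ < κ := by nlinarith [norm_nonneg t]
  exact h t t htlt htlt (by linear_combination ht)

noncomputable def keyPoly (d : ℕ) (u : ℕ → ℂ) : ℂ[X] :=
  ∑ j ∈ range (d + 1), C ((d.choose j : ℂ) * u j) * X ^ j

theorem coeff_keyPoly (d : ℕ) (u : ℕ → ℂ) (j : ℕ) :
    (keyPoly d u).coeff j = d.choose j * u j := by
  rw [keyPoly, finsetSum_coeff]
  simp only [coeff_C_mul_X_pow]
  rw [Finset.sum_ite_eq]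
  split_ifs with hj
  · rfl
  · rw [Nat.choose_eq_zero_of_lt (by simpa [Nat.lt_succ_iff] using hj)]
    simp

theorem natDegree_keyPoly_le (d : ℕ) (u : ℕ → ℂ) : (keyPoly d u).natDegree ≤ d :=
  natDegree_le_iff_coeff_eq_zero.mpr fun j hj => by
    rw [coeff_keyPoly, Nat.choose_eq_zero_of_lt (by exact_mod_cast hj)]
    simp

theorem eval_keyPoly (d : ℕ) (u : ℕ → ℂ) (z : ℂ) :
    (keyPoly d u).eval z = ∑ j ∈ range (d + 1), (d.choose j : ℂ) * u j * z ^ j := by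
  simp [keyPoly, eval_finsetSum]

theorem keyPoly_polar (d : ℕ) (u : ℕ → ℂ) (y : ℂ) :
    C ((d : ℂ) + 1) * keyPoly d (fun j => u j + y * u (j + 1)) =
      C ((d : ℂ) + 1) * keyPoly (d + 1) u + (C y - X) * derivative (keyPoly (d + 1) u) := by
  ext j
  rcases j with _ | j
  · simp [coeff_keyPoly, coeff_derivative]
    ring
  · have h₁ : ((d + 1 : ℕ) : ℂ) * d.choose j = (d + 1).choose (j + 1) * (j + 1 : ℕ) := by
      exact_mod_cast Nat.add_one_mul_choose_eq d j
    have h₂ : ((d + 1 : ℕ) : ℂ) * d.choose (j + 1) = (d + 1).choose (j + 2) * (j + 2 : ℕ) := by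
      exact_mod_cast Nat.add_one_mul_choose_eq d (j + 1)
    have h₃ : ((d + 1).choose (j + 1) : ℂ) = d.choose j + d.choose (j + 1) := by
      exact_mod_cast Nat.choose_succ_succ d j
    simp only [coeff_add, coeff_C_mul, sub_mul, coeff_sub, coeff_X_mul, coeff_derivative,
      coeff_keyPoly]
    push_cast at h₁ h₂ h₃ ⊢
    linear_combination -u (j + 1) * h₁ + y * u (j + 2) * h₂ - (d + 1) * u (j + 1) * h₃

theorem concaveOn_normSq_sub_mul_sub_normSq_one_sub {y z : ℂ} {κ : ℝ} (hz : ‖z‖ < κ) :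
    ConcaveOn ℝ Set.univ fun w : ℂ =>
      Complex.normSq (y - w * z) - κ ^ 2 * Complex.normSq (1 - w) := by
  refine ⟨convex_univ, fun p _ q _ a b ha hb hab => ?_⟩
  obtain rfl : b = 1 - a := by linarith
  have hgap : 0 ≤ κ ^ 2 - Complex.normSq z := by
    rw [← Complex.sq_norm]; nlinarith [norm_nonneg z]
  have key : a * (1 - a) * (κ ^ 2 - Complex.normSq z) * Complex.normSq (p - q) =
      (Complex.normSq (y - (a • p + (1 - a) • q) * z) -
        κ ^ 2 * Complex.normSq (1 - (a • p + (1 - a) • q))) -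
      (a • (Complex.normSq (y - p * z) - κ ^ 2 * Complex.normSq (1 - p)) +
        (1 - a) • (Complex.normSq (y - q * z) - κ ^ 2 * Complex.normSq (1 - q))) := by
    simp only [Complex.real_smul, smul_eq_mul, Complex.normSq_apply, Complex.mul_re,
      Complex.mul_im, Complex.sub_re, Complex.sub_im, Complex.add_re, Complex.add_im,
      Complex.ofReal_re, Complex.ofReal_im, Complex.one_re, Complex.one_im]
    ring
  have := mul_nonneg (mul_nonneg (mul_nonneg ha hb) hgap) (Complex.normSq_nonneg (p - q))
  linarith

theorem laguerre_polar_ne_zero {K : ℂ[X]} {n : ℕ} {κ : ℝ} (hn : 0 < n) (hdeg : K.natDegree ≤ n)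
    (hK : ∀ z : ℂ, ‖z‖ < κ → K.eval z ≠ 0) {y z : ℂ} (hy : ‖y‖ < κ) (hz : ‖z‖ < κ) :
    n * K.eval z + (y - z) * K.derivative.eval z ≠ 0 := by
  intro h
  have hKz : K.eval z ≠ 0 := hK z hz
  have hK0 : K ≠ 0 := by rintro rfl; simp at hKz
  have hfar : ∀ r ∈ K.roots, κ ≤ ‖r‖ := fun r hr =>
    not_lt.1 fun hlt => hK r hlt ((mem_roots hK0).1 hr)
  have hzr : ∀ r ∈ K.roots, z - r ≠ 0 := fun r hr hzr => by
    rw [sub_eq_zero.1 hzr] at hz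
    exact (hfar r hr).not_gt hz
  have hlog : (n : ℂ) + (y - z) * (K.roots.map fun r => 1 / (z - r)).sum = 0 := by
    rw [(IsAlgClosed.splits K).eval_derivative_eq_eval_mul_sum hKz] at h
    exact (mul_eq_zero.1 (by linear_combination h)).resolve_left hKz
  -- The Möbius map `r ↦ (y - r) / (z - r)` sends `{κ ≤ ‖r‖}` and `∞` into the convex set
  -- `{0 ≤ f}`, which misses `0`; yet `hlog` makes `0` the mean of the images of the roots of `K`
  -- together with `n - #roots` copies of the image `1` of `∞`.
  set f : ℂ → ℝ := fun w => Complex.normSq (y - w * z) - κ ^ 2 * Complex.normSq (1 - w)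
  have hDconv : Convex ℝ {w ∈ Set.univ | 0 ≤ f w} :=
    (concaveOn_normSq_sub_mul_sub_normSq_one_sub hz).convex_ge 0
  have hf0 : f 0 < 0 := by
    simp only [f, zero_mul, sub_zero, ← Complex.sq_norm, norm_one]
    nlinarith [norm_nonneg y]
  have hf1 : 0 ≤ f 1 := by simp [f, Complex.normSq_nonneg]
  have hfroot : ∀ r ∈ K.roots, 0 ≤ f ((y - r) / (z - r)) := fun r hr => by
    have e₁ : y - (y - r) / (z - r) * z = r * ((z - y) / (z - r)) := by
      field_simp [hzr r hr]; ring
    have e₂ : 1 - (y - r) / (z - r) = (z - y) / (z - r) := by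
      field_simp [hzr r hr]; ring
    simp only [f, e₁, e₂, Complex.normSq_mul, ← Complex.sq_norm r]
    have hκr : κ ^ 2 ≤ ‖r‖ ^ 2 := pow_le_pow_left₀ (by linarith [norm_nonneg y]) (hfar r hr) 2
    nlinarith [Complex.normSq_nonneg ((z - y) / (z - r))]
  set M : Multiset ℂ := K.roots.map (fun r => (y - r) / (z - r)) +
    Multiset.replicate (n - Multiset.card K.roots) 1
  have hm : Multiset.card K.roots ≤ n := (card_roots' K).trans hdeg
  have hcard : Multiset.card M = n := by simp [M, hm]
  have hsum : M.sum = 0 := by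
    have : K.roots.map (fun r => (y - r) / (z - r)) =
        K.roots.map (fun r => 1 + (y - z) * (1 / (z - r))) :=
      Multiset.map_congr rfl fun r hr => by field_simp [hzr r hr]; ring
    simp only [M, Multiset.sum_add, this, Multiset.sum_map_add, Multiset.sum_map_mul_left,
      Multiset.map_const', Multiset.sum_replicate, nsmul_eq_mul, mul_one, Nat.cast_sub hm]
    linear_combination hlog
  have hMD : ∀ w ∈ M, w ∈ {w ∈ Set.univ | 0 ≤ f w} := by
    simp only [M, Multiset.mem_add, Multiset.mem_map, Multiset.mem_replicate]
    rintro w (⟨r, hr, rfl⟩ | ⟨-, rfl⟩)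
    exacts [⟨trivial, hfroot r hr⟩, ⟨trivial, hf1⟩]
  have hM0 : M ≠ 0 := by rw [← Multiset.card_pos, hcard]; exact hn
  have hmean := hDconv.inv_card_smul_multiset_sum_mem hM0 hMD
  rw [hsum, smul_zero] at hmean
  exact hf0.not_ge hmean.2

def KeyZeroFree (κ : ℝ) (d : ℕ) (u : ℕ → ℂ) : Prop :=
  ∀ z : ℂ, ‖z‖ < κ → (keyPoly d u).eval z ≠ 0

theorem KeyZeroFree.mix {κ : ℝ} {d : ℕ} {u : ℕ → ℂ} (h : KeyZeroFree κ (d + 1) u) {y : ℂ}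
    (hy : ‖y‖ < κ) : KeyZeroFree κ d fun j => u j + y * u (j + 1) := by
  intro z hz hQ
  have hpolar := congrArg (eval z) (keyPoly_polar d u y)
  simp only [eval_mul, eval_add, eval_sub, eval_C, eval_X, hQ, mul_zero] at hpolar
  refine laguerre_polar_ne_zero (n := d + 1) d.succ_pos (natDegree_keyPoly_le _ _) h hy hz ?_
  push_cast
  linear_combination -hpolar

section PartitionFunction

variable {V E : Type*} [DecidableEq V] (ε₁ ε₂ : E → V)

def subgraphDegree (H : Finset E) (v : V) : ℕ :=
  #{e ∈ H | ε₁ e = v} + #{e ∈ H | ε₂ e = v}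

theorem subgraphDegree_empty (v : V) : subgraphDegree ε₁ ε₂ ∅ v = 0 := by
  simp [subgraphDegree]

theorem subgraphDegree_insert [DecidableEq E] {e : E} {H : Finset E} (he : e ∉ H) (v : V) :
    subgraphDegree ε₁ ε₂ (insert e H) v =
      subgraphDegree ε₁ ε₂ H v + (if ε₁ e = v then 1 else 0) + (if ε₂ e = v then 1 else 0) := by
  have h₁ : e ∉ {e ∈ H | ε₁ e = v} := fun h => he (mem_filter.1 h).1
  have h₂ : e ∉ {e ∈ H | ε₂ e = v} := fun h => he (mem_filter.1 h).1
  unfold subgraphDegree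
  rw [filter_insert, filter_insert]
  split_ifs <;> simp [card_insert_of_notMem, h₁, h₂] <;> omega

def shiftAt (a : V) (u : V → ℕ → ℂ) : V → ℕ → ℂ :=
  fun v j => u v (j + if a = v then 1 else 0)

-- Attaches to `a` a half-edge of activity `y`.
def mixAt (a : V) (y : ℂ) (u : V → ℕ → ℂ) : V → ℕ → ℂ :=
  fun v j => u v j + if a = v then y * u v (j + 1) else 0

theorem shiftAt_comm (a b : V) (u : V → ℕ → ℂ) :
    shiftAt a (shiftAt b u) = shiftAt b (shiftAt a u) := by
  funext v j
  simp only [shiftAt, add_right_comm]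

theorem shiftAt_mixAt (a b : V) (y : ℂ) (u : V → ℕ → ℂ) :
    shiftAt a (mixAt b y u) = mixAt b y (shiftAt a u) := by
  funext v j
  simp only [shiftAt, mixAt, add_right_comm]

theorem keyZeroFree_mixAt {κ : ℝ} {d : V → ℕ} {u : V → ℕ → ℂ} {a : V}
    (hu : ∀ v, KeyZeroFree κ (d v + if a = v then 1 else 0) (u v)) {y : ℂ} (hy : ‖y‖ < κ) (v : V) :
    KeyZeroFree κ (d v) (mixAt a y u v) := by
  have h := hu v
  by_cases hav : a = v
  · subst hav
    rw [if_pos rfl] at h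
    convert h.mix hy using 2 with j
    simp [mixAt]
  · rw [if_neg hav, add_zero] at h
    convert h using 2
    exact funext fun j => by simp [mixAt, hav]

variable [Fintype V]

theorem prod_pow_subgraphDegree [DecidableEq E] (x : V → ℂ) (H : Finset E) :
    ∏ v, x v ^ subgraphDegree ε₁ ε₂ H v = ∏ e ∈ H, x (ε₁ e) * x (ε₂ e) := by
  induction H using Finset.induction_on with
  | empty => simp [subgraphDegree_empty]
  | insert e H he ih =>
    simp only [subgraphDegree_insert ε₁ ε₂ he, pow_add, prod_mul_distrib, ih, prod_insert he,
      pow_ite, pow_one, pow_zero, prod_ite_eq, mem_univ, if_true]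
    ring

theorem prod_mixAt (a : V) (y : ℂ) (u : V → ℕ → ℂ) (n : V → ℕ) :
    ∏ v, mixAt a y u v (n v) = ∏ v, u v (n v) + y * ∏ v, shiftAt a u v (n v) := by
  have hoff : ∀ v ∈ univ.erase a,
      mixAt a y u v (n v) = u v (n v) ∧ shiftAt a u v (n v) = u v (n v) :=
    fun v hv => by simp [mixAt, shiftAt, (ne_of_mem_erase hv).symm]
  rw [← mul_prod_erase univ _ (mem_univ a), ← mul_prod_erase univ (fun v => u v (n v)) (mem_univ a),
    ← mul_prod_erase univ (fun v => shiftAt a u v (n v)) (mem_univ a),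
    prod_congr rfl fun v hv => (hoff v hv).1, prod_congr rfl fun v hv => (hoff v hv).2]
  simp only [mixAt, shiftAt, if_true]
  ring

def partitionFn (w : E → ℂ) (S : Finset E) (u : V → ℕ → ℂ) : ℂ :=
  ∑ H ∈ S.powerset, (∏ e ∈ H, w e) * ∏ v, u v (subgraphDegree ε₁ ε₂ H v)

variable {ε₁ ε₂} (w : E → ℂ)

theorem partitionFn_mixAt (S : Finset E) (a : V) (y : ℂ) (u : V → ℕ → ℂ) :
    partitionFn ε₁ ε₂ w S (mixAt a y u) =
      partitionFn ε₁ ε₂ w S u + partitionFn ε₁ ε₂ w S (shiftAt a u) * y := by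
  simp only [partitionFn, prod_mixAt, sum_mul, ← sum_add_distrib]
  exact sum_congr rfl fun H _ => by ring

theorem partitionFn_mixAt_mixAt (S : Finset E) (a b : V) (y y' : ℂ) (u : V → ℕ → ℂ) :
    partitionFn ε₁ ε₂ w S (mixAt a y (mixAt b y' u)) =
      partitionFn ε₁ ε₂ w S u + partitionFn ε₁ ε₂ w S (shiftAt a u) * y +
        partitionFn ε₁ ε₂ w S (shiftAt b u) * y' +
        partitionFn ε₁ ε₂ w S (shiftAt a (shiftAt b u)) * (y * y') := by
  rw [partitionFn_mixAt, partitionFn_mixAt, shiftAt_mixAt, partitionFn_mixAt, shiftAt_comm b a]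
  ring

theorem partitionFn_insert [DecidableEq E] {S : Finset E} {e : E} (he : e ∉ S) (u : V → ℕ → ℂ) :
    partitionFn ε₁ ε₂ w (insert e S) u =
      partitionFn ε₁ ε₂ w S u +
        partitionFn ε₁ ε₂ w S (shiftAt (ε₁ e) (shiftAt (ε₂ e) u)) * w e := by
  rw [partitionFn, sum_powerset_insert he, partitionFn, partitionFn, sum_mul]
  congr 1
  refine sum_congr rfl fun H hH => ?_
  have heH : e ∉ H := fun h => he (mem_powerset.1 hH h)
  simp only [prod_insert heH, subgraphDegree_insert ε₁ ε₂ heH, shiftAt, add_assoc]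
  ring

theorem partitionFn_ne_zero [DecidableEq E] {κ : ℝ} (hκ : 0 < κ) {S : Finset E}
    (hw : ∀ e ∈ S, ‖w e‖ < κ ^ 2) {u : V → ℕ → ℂ}
    (hu : ∀ v, KeyZeroFree κ (subgraphDegree ε₁ ε₂ S v) (u v)) :
    partitionFn ε₁ ε₂ w S u ≠ 0 := by
  induction S using Finset.induction_on generalizing u with
  | empty =>
    have hu₀ : ∀ v, u v 0 ≠ 0 := fun v => by
      simpa [KeyZeroFree, subgraphDegree_empty, eval_keyPoly] using hu v 0 (by simpa using hκ)
    simpa [partitionFn, subgraphDegree_empty, prod_eq_zero_iff] using hu₀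
  | insert e S he ih =>
    rw [partitionFn_insert w he]
    refine asano_contraction (B := partitionFn ε₁ ε₂ w S (shiftAt (ε₁ e) u))
      (C := partitionFn ε₁ ε₂ w S (shiftAt (ε₂ e) u)) hκ (fun y y' hy hy' => ?_)
      (hw e (mem_insert_self e S))
    rw [← partitionFn_mixAt_mixAt]
    refine ih (fun e' he' => hw e' (mem_insert_of_mem he')) (keyZeroFree_mixAt ?_ hy)
    refine keyZeroFree_mixAt (fun v => ?_) hy'
    simpa only [subgraphDegree_insert ε₁ ε₂ he] using hu v

end PartitionFunction

theorem norm_mul_mul_lt_sq {l a b : ℂ} {L κ : ℝ} (hl : ‖l‖ ≤ L) (ha : ‖a‖ < κ / √L)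
    (hb : ‖b‖ < κ / √L) : ‖l * (a * b)‖ < κ ^ 2 := by
  -- `κ / √L = 0` when `L ≤ 0`, so the hypotheses force `0 < L`.
  have hpos : 0 < κ / √L := (norm_nonneg a).trans_lt ha
  have hL : 0 < √L := by
    rcases (Real.sqrt_nonneg L).lt_or_eq with h | h
    · exact h
    · rw [← h, div_zero] at hpos
      exact absurd hpos (lt_irrefl 0)
  rw [lt_div_iff₀ hL] at ha hb
  calc ‖l * (a * b)‖ = ‖l‖ * (‖a‖ * ‖b‖) := by rw [norm_mul, norm_mul]
    _ ≤ L * (‖a‖ * ‖b‖) := by gcongr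
    _ = (‖a‖ * √L) * (‖b‖ * √L) := by
      rw [mul_mul_mul_comm, Real.mul_self_sqrt ((norm_nonneg l).trans hl)]; ring
    _ < κ ^ 2 := by rw [sq]; gcongr

theorem main_theorem_disk_general
    {V E : Type*} [Fintype V] [DecidableEq V] [Fintype E] [DecidableEq E]
    (ε₁ ε₂ : E → V)
    (deg : Finset E → V → ℕ)
    (hdeg : ∀ (H : Finset E) (v : V),
      deg H v = (H.filter fun e => ε₁ e = v).card + (H.filter fun e => ε₂ e = v).card)
    (lam : E → ℂ) (lamMax : ℝ)
    (hlam : ∀ e, ‖lam e‖ ≤ lamMax)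
    (u : V → ℕ → ℂ) (κ : ℝ) (hκ : 0 < κ)
    (hkey : ∀ v : V, ∀ z : ℂ, ‖z‖ < κ →
      (∑ j ∈ Finset.range (deg Finset.univ v + 1),
        ((deg Finset.univ v).choose j : ℂ) * u v j * z ^ j) ≠ 0)
    (Z : (V → ℂ) → ℂ)
    (hZ : ∀ x : V → ℂ, Z x = ∑ H : Finset E,
      (∏ e ∈ H, lam e) * (∏ v : V, u v (deg H v)) * ∏ v : V, x v ^ deg H v) :
    (∀ x : V → ℂ, Z x = 0) ∨
      (∀ x : V → ℂ, (∀ v, ‖x v‖ < κ / Real.sqrt lamMax) → Z x ≠ 0) := by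
  obtain rfl : deg = subgraphDegree ε₁ ε₂ := funext₂ hdeg
  refine Or.inr fun x hx => ?_
  have hw : ∀ e ∈ (univ : Finset E), ‖lam e * (x (ε₁ e) * x (ε₂ e))‖ < κ ^ 2 :=
    fun e _ => norm_mul_mul_lt_sq (hlam e) (hx _) (hx _)
  have hu : ∀ v, KeyZeroFree κ (subgraphDegree ε₁ ε₂ univ v) (u v) := fun v z hz => by
    rw [eval_keyPoly]
    exact hkey v z hz
  convert partitionFn_ne_zero _ hκ hw hu using 1
  rw [hZ, partitionFn, powerset_univ]
  refine sum_congr rfl fun H _ => ?_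
  rw [prod_mul_distrib, prod_pow_subgraphDegree]
  ring

/-- Theorem 3.2(b): disk version of the main theorem. -/
theorem main_theorem_disk
    {V E : Type*} [Fintype V] [DecidableEq V] [Fintype E] [DecidableEq E]
    (ε₁ ε₂ : E → V)
    (deg : Finset E → V → ℕ)
    (hdeg : ∀ (H : Finset E) (v : V),
      deg H v = (H.filter fun e => ε₁ e = v).card + (H.filter fun e => ε₂ e = v).card)
    (lam : E → ℂ) (lamMax : ℝ) (hMax : 0 < lamMax)
    (hlam : ∀ e, ‖lam e‖ ≤ lamMax)
    (u : V → ℕ → ℂ) (κ : ℝ) (hκ : 0 < κ)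
    (hkey : ∀ v : V, ∀ z : ℂ, ‖z‖ < κ →
      (∑ j ∈ Finset.range (deg Finset.univ v + 1),
        ((deg Finset.univ v).choose j : ℂ) * u v j * z ^ j) ≠ 0)
    (Z : (V → ℂ) → ℂ)
    (hZ : ∀ x : V → ℂ, Z x = ∑ H : Finset E,
      (∏ e ∈ H, lam e) * (∏ v : V, u v (deg H v)) * ∏ v : V, x v ^ deg H v) :
    (∀ x : V → ℂ, Z x = 0) ∨
      (∀ x : V → ℂ, (∀ v, ‖x v‖ < κ / Real.sqrt lamMax) → Z x ≠ 0) :=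
  main_theorem_disk_general ε₁ ε₂ deg hdeg lam lamMax hlam u κ hκ hkey Z hZ
end

section
/- Let G = (V,E) be a finite graph with nonnegative real edge weights λ_e. Then the multivariate matching polynomial μ̃(G,λ;x) = Σ_M λ^M Π_v x_v^{deg(M,v)}, where the sum is over all matchings M of G, is nonzero whenever Re x_v > 0 (indeed whenever |arg x_v| < π/2) for all v ∈ V. -/
/-!
Encode the graph by `ends : E → Sym2 V` and let `q S` be the matching sum of the subgraph induced
on `S`, an edge `e` with ends `s(u, v)` having weight `λ_e x_u x_v`. Sorting matchings by the edge
covering `v` gives `q S = q (S - v) + x_v ∑_{e = uv} λ_e x_u q (S - v - u)`. By induction on `S`,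
`q S ≠ 0` and `r_v(S) := x_v q (S - v) / q S` has positive real part: the recursion reads
`r_v(S)⁻¹ = x_v⁻¹ + ∑_{e = uv} λ_e r_u(S - v)`, a sum of a number with positive real part and
numbers with nonnegative real part, and inversion preserves the open right half-plane.
-/

open Real Finset

theorem Complex.re_inv_pos {z : ℂ} (hz : 0 < z.re) : 0 < z⁻¹.re := by
  rw [Complex.inv_re]
  exact div_pos hz (Complex.normSq_pos.2 fun h => by simp [h] at hz)

namespace Multigraph

variable {V E : Type*} (ends : E → Sym2 V)

def IsMatchingIn (S : Finset V) (M : Finset E) : Prop :=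
  ∀ e ∈ M, ¬(ends e).IsDiag ∧ ∀ v ∈ ends e, v ∈ S ∧ ∀ f ∈ M, v ∈ ends f → f = e

noncomputable def edgeWeight (lam : E → ℝ) (x : V → ℂ) (e : E) : ℂ :=
  lam e * Sym2.lift ⟨fun a b => x a * x b, fun _ _ => mul_comm _ _⟩ (ends e)

section Fintype

variable [Fintype E]

open Classical in
noncomputable def matchingsIn (S : Finset V) : Finset (Finset E) :=
  univ.filter (IsMatchingIn ends S)

open Classical in
noncomputable def edgesAt (S : Finset V) (v : V) : Finset E :=
  univ.filter fun e => ¬(ends e).IsDiag ∧ v ∈ ends e ∧ ∀ u ∈ ends e, u ∈ S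

noncomputable def matchingSum {R : Type*} [CommSemiring R] (w : E → R) (S : Finset V) : R :=
  ∑ M ∈ matchingsIn ends S, ∏ e ∈ M, w e

variable {ends}

@[simp]
theorem mem_matchingsIn {S : Finset V} {M : Finset E} :
    M ∈ matchingsIn ends S ↔ IsMatchingIn ends S M := by
  simp [matchingsIn]

@[simp]
theorem mem_edgesAt {S : Finset V} {v : V} {e : E} :
    e ∈ edgesAt ends S v ↔ ¬(ends e).IsDiag ∧ v ∈ ends e ∧ ∀ u ∈ ends e, u ∈ S := by
  simp [edgesAt]

end Fintype

variable {ends}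

theorem IsMatchingIn.mem_of_mem_ends {S : Finset V} {M : Finset E} (hM : IsMatchingIn ends S M)
    {e : E} {v : V} (he : e ∈ M) (hv : v ∈ ends e) : v ∈ S :=
  ((hM e he).2 v hv).1

theorem matchingsIn_empty [Fintype E] : matchingsIn ends (∅ : Finset V) = {∅} := by
  ext M
  rw [mem_matchingsIn, mem_singleton]
  constructor
  · exact fun hM => eq_empty_of_forall_notMem fun e he =>
      notMem_empty _ (hM.mem_of_mem_ends he (Sym2.out_fst_mem (ends e)))
  · rintro rfl
    simp [IsMatchingIn]

theorem matchingSum_empty [Fintype E] {R : Type*} [CommSemiring R] (w : E → R) :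
    matchingSum ends w (∅ : Finset V) = 1 := by
  simp [matchingSum, matchingsIn_empty]

variable [DecidableEq V]

theorem isMatchingIn_erase_iff {S : Finset V} {M : Finset E} {v : V} :
    IsMatchingIn ends (S.erase v) M ↔ IsMatchingIn ends S M ∧ ∀ e ∈ M, v ∉ ends e := by
  simp only [IsMatchingIn, mem_erase]
  grind

theorem IsMatchingIn.notMem_ends_of_filter {S : Finset V} {M : Finset E} {e f : E} {v : V}
    (hM : IsMatchingIn ends (S.filter (· ∉ ends f)) M) (he : e ∈ M) (hv : v ∈ ends e) :
    v ∉ ends f :=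
  (mem_filter.1 (hM.mem_of_mem_ends he hv)).2

theorem IsMatchingIn.notMem_of_filter {S : Finset V} {M : Finset E} {e : E} {v : V}
    (hM : IsMatchingIn ends (S.filter (· ∉ ends e)) M) (hv : v ∈ ends e) : e ∉ M := fun he =>
  hM.notMem_ends_of_filter he hv hv

theorem isMatchingIn_insert_iff [DecidableEq E] {S : Finset V} {M : Finset E} {e : E}
    (he : e ∉ M) :
    IsMatchingIn ends S (insert e M) ↔
      ¬(ends e).IsDiag ∧ (∀ v ∈ ends e, v ∈ S) ∧
        IsMatchingIn ends (S.filter (· ∉ ends e)) M := by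
  simp only [IsMatchingIn, mem_filter, mem_insert, forall_eq_or_imp]
  grind

theorem filter_notMem_mk (S : Finset V) (v u : V) :
    S.filter (· ∉ s(v, u)) = (S.erase v).erase u := by
  ext
  simp only [mem_filter, mem_erase, Sym2.mem_iff, not_or]
  tauto

theorem exists_eq_mk_of_mem_edgesAt [Fintype E] {S : Finset V} {v : V} {e : E}
    (he : e ∈ edgesAt ends S v) : ∃ u ∈ S.erase v, ends e = s(v, u) := by
  obtain ⟨hd, hv, hS⟩ := mem_edgesAt.1 he
  exact ⟨Sym2.Mem.other hv, mem_erase.2 ⟨Sym2.other_ne hd hv, hS _ (Sym2.other_mem hv)⟩,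
    (Sym2.other_spec hv).symm⟩

variable [DecidableEq E] [Fintype E]

theorem filter_matchingsIn_covering (S : Finset V) (v : V) :
    (matchingsIn ends S).filter (fun M => ∃ e ∈ M, v ∈ ends e) =
      (edgesAt ends S v).biUnion
        fun e => (matchingsIn ends (S.filter (· ∉ ends e))).image (insert e) := by
  ext M
  simp only [mem_filter, mem_matchingsIn, mem_biUnion, mem_image, mem_edgesAt]
  constructor
  · rintro ⟨hM, e, he, hv⟩
    have hinsert : insert e (M.erase e) = M := insert_erase he
    rw [← hinsert, isMatchingIn_insert_iff (notMem_erase e M)] at hM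
    exact ⟨e, ⟨hM.1, hv, hM.2.1⟩, M.erase e, hM.2.2, hinsert⟩
  · rintro ⟨e, ⟨hd, hv, hS⟩, M', hM', rfl⟩
    exact ⟨(isMatchingIn_insert_iff (hM'.notMem_of_filter hv)).2 ⟨hd, hS, hM'⟩,
      e, mem_insert_self e M', hv⟩

theorem pairwiseDisjoint_image_insert_matchingsIn (S : Finset V) (v : V) :
    (edgesAt ends S v : Set E).PairwiseDisjoint
      fun e => (matchingsIn ends (S.filter (· ∉ ends e))).image (insert e) := by
  intro e he f hf hef
  refine disjoint_left.2 ?_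
  simp only [mem_image, mem_matchingsIn, not_exists, not_and]
  rintro _ ⟨M, -, rfl⟩ N hN hNM
  have heN : e ∈ N := (mem_insert.1 (hNM ▸ mem_insert_self e M)).resolve_left hef
  exact hN.notMem_ends_of_filter heN (mem_edgesAt.1 he).2.1 (mem_edgesAt.1 hf).2.1

theorem sum_image_insert_matchingsIn {R : Type*} [CommSemiring R] (w : E → R) {S : Finset V}
    {v : V} {e : E} (he : e ∈ edgesAt ends S v) :
    ∑ M ∈ (matchingsIn ends (S.filter (· ∉ ends e))).image (insert e), ∏ f ∈ M, w f =
      w e * matchingSum ends w (S.filter (· ∉ ends e)) := by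
  have hnot : ∀ M ∈ matchingsIn ends (S.filter (· ∉ ends e)), e ∉ M := fun M hM =>
    (mem_matchingsIn.1 hM).notMem_of_filter (mem_edgesAt.1 he).2.1
  rw [sum_image fun M hM N hN h => by
    rw [← erase_insert (hnot M hM), ← erase_insert (hnot N hN), h], matchingSum, mul_sum]
  exact sum_congr rfl fun M hM => prod_insert (hnot M hM)

theorem matchingSum_eq_erase_add {R : Type*} [CommSemiring R] (w : E → R) (S : Finset V)
    (v : V) :
    matchingSum ends w S = matchingSum ends w (S.erase v) +
      ∑ e ∈ edgesAt ends S v, w e * matchingSum ends w (S.filter (· ∉ ends e)) := by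
  have huncovered : (matchingsIn ends S).filter (fun M => ¬∃ e ∈ M, v ∈ ends e) =
      matchingsIn ends (S.erase v) := by
    ext M
    simp [isMatchingIn_erase_iff]
  rw [matchingSum, ← sum_filter_not_add_sum_filter _ (fun M => ∃ e ∈ M, v ∈ ends e),
    huncovered, filter_matchingsIn_covering,
    sum_biUnion (pairwiseDisjoint_image_insert_matchingsIn S v),
    sum_congr rfl fun e he => sum_image_insert_matchingsIn w he, matchingSum]

section HalfPlane

variable {lam : E → ℝ} {x : V → ℂ}

local notation "q" => matchingSum ends (edgeWeight ends lam x)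

theorem matchingSum_ratio_step (hlam : ∀ e, 0 ≤ lam e) (hx : ∀ v, 0 < (x v).re)
    {S : Finset V} {v : V} (hQ : q (S.erase v) ≠ 0)
    (hratio : ∀ u ∈ S.erase v, 0 < (x u * q ((S.erase v).erase u) / q (S.erase v)).re) :
    q S ≠ 0 ∧ 0 < (x v * q (S.erase v) / q S).re := by
  have hxv : x v ≠ 0 := fun h => by simpa [h] using hx v
  set W := ∑ e ∈ edgesAt ends S v,
    edgeWeight ends lam x e * q (S.filter (· ∉ ends e)) / (x v * q (S.erase v)) with hW
  have hW_re : 0 ≤ W.re := by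
    rw [Complex.re_sum]
    refine sum_nonneg fun e he => ?_
    obtain ⟨u, hu, hends⟩ := exists_eq_mk_of_mem_edgesAt he
    have hterm : edgeWeight ends lam x e * q (S.filter (· ∉ ends e)) / (x v * q (S.erase v)) =
        lam e * (x u * q ((S.erase v).erase u) / q (S.erase v)) := by
      rw [edgeWeight, hends, Sym2.lift_mk, filter_notMem_mk]
      field_simp
    rw [hterm, Complex.re_ofReal_mul]
    exact mul_nonneg (hlam e) (hratio u hu).le
  have hpos : 0 < ((x v)⁻¹ + W).re := by
    rw [Complex.add_re]
    linarith [Complex.re_inv_pos (hx v)]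
  have hne : (x v)⁻¹ + W ≠ 0 := fun h => by simp [h] at hpos
  have hfactor : q S = x v * q (S.erase v) * ((x v)⁻¹ + W) := by
    rw [matchingSum_eq_erase_add _ S v, hW, mul_add, mul_sum]
    field_simp
  refine ⟨hfactor ▸ mul_ne_zero (mul_ne_zero hxv hQ) hne, ?_⟩
  have hratio_eq : x v * q (S.erase v) / q S = ((x v)⁻¹ + W)⁻¹ := by
    rw [hfactor]
    field_simp
  exact hratio_eq ▸ Complex.re_inv_pos hpos

theorem matchingSum_ne_zero_and_ratio_re_pos (hlam : ∀ e, 0 ≤ lam e)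
    (hx : ∀ v, 0 < (x v).re) (S : Finset V) :
    q S ≠ 0 ∧ ∀ v ∈ S, 0 < (x v * q (S.erase v) / q S).re := by
  induction S using Finset.strongInduction with
  | H S ih =>
    have hstep : ∀ v ∈ S, q S ≠ 0 ∧ 0 < (x v * q (S.erase v) / q S).re := fun v hv =>
      have ⟨hQ, hratio⟩ := ih _ (erase_ssubset hv)
      matchingSum_ratio_step hlam hx hQ hratio
    refine ⟨?_, fun v hv => (hstep v hv).2⟩
    rcases S.eq_empty_or_nonempty with rfl | ⟨v, hv⟩
    · rw [matchingSum_empty]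
      exact one_ne_zero
    · exact (hstep v hv).1

end HalfPlane

end Multigraph

theorem multivariate_heilmann_lieb_general
    {V E : Type*} [Fintype V] [DecidableEq V] [Fintype E]
    (ε₁ ε₂ : E → V)   -- endpoints of each edge (a loop has ε₁ e = ε₂ e)
    (IsMatching : Finset E → Prop) [DecidablePred IsMatching]
    (hmatch : ∀ M : Finset E, IsMatching M ↔
      ((∀ e ∈ M, ε₁ e ≠ ε₂ e) ∧
        ∀ e ∈ M, ∀ f ∈ M, e ≠ f →
          ε₁ e ≠ ε₁ f ∧ ε₁ e ≠ ε₂ f ∧ ε₂ e ≠ ε₁ f ∧ ε₂ e ≠ ε₂ f))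
    (deg : Finset E → V → ℕ)
    (hdeg : ∀ (H : Finset E) (v : V),
      deg H v = (H.filter fun e => ε₁ e = v).card + (H.filter fun e => ε₂ e = v).card)
    (lam : E → ℝ) (hlam : ∀ e, 0 ≤ lam e)
    (x : V → ℂ) (hx : ∀ v, x v ≠ 0 ∧ |(x v).arg| < π / 2) :
    (∑ M ∈ Finset.univ.filter fun M : Finset E => IsMatching M,
      (∏ e ∈ M, (lam e : ℂ)) * ∏ v : V, x v ^ deg M v) ≠ 0 := by
  classical
  set ends : E → Sym2 V := fun e => s(ε₁ e, ε₂ e)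
  have hre : ∀ v, 0 < (x v).re := fun v =>
    (Complex.abs_arg_lt_pi_div_two_iff.1 (hx v).2).resolve_right (hx v).1
  have hmatchings : univ.filter IsMatching = Multigraph.matchingsIn ends univ := by
    ext M
    simp only [mem_filter, mem_univ, true_and, Multigraph.mem_matchingsIn, hmatch,
      Multigraph.IsMatchingIn, ends, Sym2.mk_isDiag_iff, Sym2.mem_iff, or_imp, forall_and,
      forall_eq]
    grind
  have hterm : ∀ M : Finset E, (∏ e ∈ M, (lam e : ℂ)) * ∏ v, x v ^ deg M v =
      ∏ e ∈ M, Multigraph.edgeWeight ends lam x e := fun M => by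
    simp_rw [hdeg, pow_add, prod_mul_distrib, ← prod_const, prod_fiberwise',
      Multigraph.edgeWeight, ends, Sym2.lift_mk, prod_mul_distrib]
  rw [hmatchings, sum_congr rfl fun M _ => hterm M]
  exact (Multigraph.matchingSum_ne_zero_and_ratio_re_pos hlam hre univ).1

/-- The multivariate Heilmann–Lieb theorem: the multivariate matching
polynomial with nonnegative edge weights is nonvanishing on the open right
half-plane. -/
theorem multivariate_heilmann_lieb
    {V E : Type*} [Fintype V] [DecidableEq V] [Fintype E] [DecidableEq E]
    (ε₁ ε₂ : E → V)   -- endpoints of each edge (a loop has ε₁ e = ε₂ e)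
    (IsMatching : Finset E → Prop) [DecidablePred IsMatching]
    (hmatch : ∀ M : Finset E, IsMatching M ↔
      ((∀ e ∈ M, ε₁ e ≠ ε₂ e) ∧
        ∀ e ∈ M, ∀ f ∈ M, e ≠ f →
          ε₁ e ≠ ε₁ f ∧ ε₁ e ≠ ε₂ f ∧ ε₂ e ≠ ε₁ f ∧ ε₂ e ≠ ε₂ f))
    (deg : Finset E → V → ℕ)
    (hdeg : ∀ (H : Finset E) (v : V),
      deg H v = (H.filter fun e => ε₁ e = v).card + (H.filter fun e => ε₂ e = v).card)
    (lam : E → ℝ) (hlam : ∀ e, 0 ≤ lam e)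
    (x : V → ℂ) (hx : ∀ v, x v ≠ 0 ∧ |(x v).arg| < π / 2) :
    (∑ M ∈ Finset.univ.filter fun M : Finset E => IsMatching M,
      (∏ e ∈ M, (lam e : ℂ)) * ∏ v : V, x v ^ deg M v) ≠ 0 :=
  multivariate_heilmann_lieb_general ε₁ ε₂ IsMatching hmatch deg hdeg lam hlam x hx
end

section
/- Let G = (V,E) be a finite graph. Then every complex zero of the univariate matching polynomial μ(G;y) = Σ_k m_k(G) y^k, where m_k(G) is the number of k-edge matchings of G, is a nonpositive real number. -/
/-!
Put `y = t²` with `Re t > 0`. For a vertex set `W` and `v ∈ W`, splitting the matchings of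
`G[W]` according to the edge (if any) covering `v` gives
`μ(W) = μ(W - v) + t² ∑_{e = vu} μ(W - v - u)`, so the ratio `R_v(W) = μ(W) / (t μ(W - v))`
satisfies `R_v(W) = t⁻¹ + ∑_{e = vu} R_u(W - v)⁻¹`. The open right half-plane contains `t⁻¹`
and is closed under inversion and addition, so by induction on `W` every `R_v(W)` lies in it;
in particular `μ(W) ≠ 0`. Every `y` off the closed negative real axis has such a square root `t`.
-/

open Finset Complex

namespace Complex

lemma inv_re_pos {w : ℂ} (hw : 0 < w.re) : 0 < w⁻¹.re := by
  rw [inv_re]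
  exact div_pos hw (normSq_pos.2 (ne_zero_of_re_pos hw))

lemma re_cpow_inv_two_pos {z : ℂ} (hz : z ∈ slitPlane) : 0 < (z ^ (2⁻¹ : ℂ)).re := by
  rw [cpow_inv_two_re, Real.sqrt_pos]
  rcases mem_slitPlane_iff.1 hz with hre | him
  · linarith [norm_nonneg z]
  · linarith [neg_abs_le z.re, abs_re_lt_norm.2 him]

end Complex

lemma add_sq_mul_sum_div_mul {K ι : Type*} [Field K] {t b : K} (ht : t ≠ 0) (hb : b ≠ 0)
    (s : Finset ι) (c : ι → K) :
    (b + t ^ 2 * ∑ i ∈ s, c i) / (t * b) = t⁻¹ + ∑ i ∈ s, (b / (t * c i))⁻¹ := by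
  rw [add_div, mul_sum, sum_div]
  congr 1
  · field_simp
  · refine sum_congr rfl fun i _ => ?_
    rw [inv_div]
    field_simp

lemma sum_pow_card_eq_sum_range {α R : Type*} [Fintype α] [CommSemiring R]
    (S : Finset (Finset α)) (y : R) :
    ∑ M ∈ S, y ^ #M = ∑ k ∈ range (Fintype.card α + 1), #{M ∈ S | #M = k} * y ^ k := by
  rw [← sum_fiberwise_of_maps_to (g := card) fun M _ => mem_range_succ_iff.2 (card_le_univ M)]
  refine sum_congr rfl fun k _ => ?_
  rw [sum_congr rfl fun M hM => congrArg (y ^ ·) (mem_filter.1 hM).2, sum_const, nsmul_eq_mul]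

namespace HeilmannLieb

theorem ne_zero_and_re_div_pos_of_recurrence {V ι : Type*} [DecidableEq V] {t : ℂ} (ht : 0 < t.re)
    {f : Finset V → ℂ} (h₀ : f ∅ ≠ 0) {nbrs : V → Finset V → Finset ι} {other : V → ι → V}
    (hother : ∀ W, ∀ v ∈ W, ∀ e ∈ nbrs v W, other v e ∈ W.erase v)
    (hrec : ∀ W, ∀ v ∈ W,
      f W = f (W.erase v) + t ^ 2 * ∑ e ∈ nbrs v W, f ((W.erase v).erase (other v e)))
    (W : Finset V) : f W ≠ 0 ∧ ∀ v ∈ W, 0 < (f W / (t * f (W.erase v))).re := by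
  induction W using Finset.strongInduction with
  | _ W ih =>
    have hratio : ∀ v ∈ W, 0 < (f W / (t * f (W.erase v))).re := by
      intro v hv
      obtain ⟨hne, hpos⟩ := ih _ (erase_ssubset hv)
      rw [hrec W v hv, add_sq_mul_sum_div_mul (ne_zero_of_re_pos ht) hne, add_re, re_sum]
      exact add_pos_of_pos_of_nonneg (inv_re_pos ht)
        (sum_nonneg fun e he => (inv_re_pos (hpos _ (hother W v hv e he))).le)
    refine ⟨?_, hratio⟩
    rcases W.eq_empty_or_nonempty with rfl | ⟨v, hv⟩
    · exact h₀
    · intro h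
      simpa [h] using hratio v hv

variable {V E : Type*} [DecidableEq V] (ε₁ ε₂ : E → V)

def ends (e : E) : Finset V := {ε₁ e, ε₂ e}

def other (v : V) (e : E) : V := if ε₁ e = v then ε₂ e else ε₁ e

def IsMatching (M : Finset E) : Prop :=
  (∀ e ∈ M, ε₁ e ≠ ε₂ e) ∧ (M : Set E).PairwiseDisjoint (ends ε₁ ε₂)

section Matchings

variable [Fintype E]

open Classical in
noncomputable def matchingsOn (W : Finset V) : Finset (Finset E) :=
  {M | IsMatching ε₁ ε₂ M ∧ M.biUnion (ends ε₁ ε₂) ⊆ W}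

noncomputable def matchingPoly (W : Finset V) (y : ℂ) : ℂ :=
  ∑ M ∈ matchingsOn ε₁ ε₂ W, y ^ #M

def incident (v : V) (W : Finset V) : Finset E :=
  {e | ε₁ e ≠ ε₂ e ∧ v ∈ ends ε₁ ε₂ e ∧ ends ε₁ ε₂ e ⊆ W}

end Matchings

variable {ε₁ ε₂}

lemma isMatching_iff (M : Finset E) :
    IsMatching ε₁ ε₂ M ↔ (∀ e ∈ M, ε₁ e ≠ ε₂ e) ∧
      ∀ e ∈ M, ∀ f ∈ M, e ≠ f →
        ε₁ e ≠ ε₁ f ∧ ε₁ e ≠ ε₂ f ∧ ε₂ e ≠ ε₁ f ∧ ε₂ e ≠ ε₂ f := by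
  simp only [IsMatching, Set.PairwiseDisjoint, Set.Pairwise, ends, Function.onFun, mem_coe,
    disjoint_insert_left, disjoint_insert_right, disjoint_singleton, mem_insert, mem_singleton]
  refine and_congr_right fun _ => forall₂_congr fun e _ => forall₂_congr fun f _ =>
    imp_congr_right fun _ => ?_
  grind

lemma insert_other {v : V} {e : E} (hv : v ∈ ends ε₁ ε₂ e) :
    insert v {other ε₁ ε₂ v e} = ends ε₁ ε₂ e := by
  simp only [ends, mem_insert, mem_singleton] at hv
  unfold other ends
  split_ifs <;> grind

section Matchings

variable [Fintype E]

lemma mem_matchingsOn {W : Finset V} {M : Finset E} :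
    M ∈ matchingsOn ε₁ ε₂ W ↔ IsMatching ε₁ ε₂ M ∧ M.biUnion (ends ε₁ ε₂) ⊆ W := by
  simp [matchingsOn]

lemma mem_matchingsOn_biUnion_univ {M : Finset E} :
    M ∈ matchingsOn ε₁ ε₂ (univ.biUnion (ends ε₁ ε₂)) ↔ IsMatching ε₁ ε₂ M :=
  mem_matchingsOn.trans (and_iff_left (biUnion_subset_biUnion_of_subset_left _ (subset_univ M)))

lemma matchingsOn_erase (W : Finset V) (v : V) :
    matchingsOn ε₁ ε₂ (W.erase v) = {M ∈ matchingsOn ε₁ ε₂ W | v ∉ M.biUnion (ends ε₁ ε₂)} := by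
  ext M
  simp only [mem_filter, mem_matchingsOn, subset_erase, and_assoc]

lemma notMem_of_mem_matchingsOn_sdiff {W : Finset V} {N : Finset E} {e : E}
    (hN : N ∈ matchingsOn ε₁ ε₂ (W \ ends ε₁ ε₂ e)) : e ∉ N := by
  intro he
  have : Disjoint (ends ε₁ ε₂ e) (ends ε₁ ε₂ e) :=
    (subset_sdiff.1 ((subset_biUnion_of_mem (ends ε₁ ε₂) he).trans (mem_matchingsOn.1 hN).2)).2
  simp [ends] at this

lemma other_mem_erase {W : Finset V} {v : V} {e : E} (he : e ∈ incident ε₁ ε₂ v W) :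
    other ε₁ ε₂ v e ∈ W.erase v := by
  simp only [incident, ends, mem_filter, mem_univ, true_and, insert_subset_iff, mem_insert,
    mem_singleton, singleton_subset_iff] at he
  unfold other
  split_ifs <;> grind

lemma sdiff_ends_eq_erase_erase_other {W : Finset V} {v : V} {e : E}
    (he : e ∈ incident ε₁ ε₂ v W) :
    W \ ends ε₁ ε₂ e = (W.erase v).erase (other ε₁ ε₂ v e) := by
  simp only [incident, mem_filter, mem_univ, true_and] at he
  rw [← insert_other he.2.1, sdiff_insert, sdiff_singleton_eq_erase, erase_right_comm]

lemma matchingPoly_empty (y : ℂ) : matchingPoly ε₁ ε₂ ∅ y = 1 := by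
  have : matchingsOn ε₁ ε₂ (∅ : Finset V) = {∅} := by
    ext M
    rw [mem_matchingsOn, biUnion_subset, mem_singleton]
    constructor
    · rintro ⟨-, h⟩
      exact eq_empty_of_forall_notMem fun e he => by simpa [ends] using h e he
    · rintro rfl
      simp [IsMatching]
  simp [matchingPoly, this]

variable [DecidableEq E]

lemma insert_mem_matchingsOn_iff {W : Finset V} {N : Finset E} {e : E} (he : e ∉ N) :
    insert e N ∈ matchingsOn ε₁ ε₂ W ↔
      ε₁ e ≠ ε₂ e ∧ ends ε₁ ε₂ e ⊆ W ∧ N ∈ matchingsOn ε₁ ε₂ (W \ ends ε₁ ε₂ e) := by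
  simp only [mem_matchingsOn, IsMatching, coe_insert, Set.pairwiseDisjoint_insert,
    forall_mem_insert, biUnion_insert, union_subset_iff, subset_sdiff, disjoint_biUnion_left,
    mem_coe]
  have : ∀ f ∈ N, e ≠ f := fun f hf hef => he (hef ▸ hf)
  constructor
  · rintro ⟨⟨⟨hloop, hN⟩, hpd, hdisj⟩, hW, hNW⟩
    exact ⟨hloop, hW, ⟨hN, hpd⟩, hNW, fun f hf => (hdisj f hf (this f hf)).symm⟩
  · rintro ⟨hloop, hW, ⟨hN, hpd⟩, hNW, hdisj⟩
    exact ⟨⟨⟨hloop, hN⟩, hpd, fun f hf _ => (hdisj f hf).symm⟩, hW, hNW⟩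

lemma filter_mem_matchingsOn_eq_image_insert {W : Finset V} {e : E} (hloop : ε₁ e ≠ ε₂ e)
    (hW : ends ε₁ ε₂ e ⊆ W) :
    {M ∈ matchingsOn ε₁ ε₂ W | e ∈ M} =
      (matchingsOn ε₁ ε₂ (W \ ends ε₁ ε₂ e)).image (insert e) := by
  ext M
  simp only [mem_filter, mem_image]
  constructor
  · rintro ⟨hM, he⟩
    rw [← insert_erase he, insert_mem_matchingsOn_iff (notMem_erase e M)] at hM
    exact ⟨M.erase e, hM.2.2, insert_erase he⟩
  · rintro ⟨N, hN, rfl⟩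
    exact ⟨(insert_mem_matchingsOn_iff (notMem_of_mem_matchingsOn_sdiff hN)).2 ⟨hloop, hW, hN⟩,
      mem_insert_self e N⟩

lemma sum_filter_mem_matchingsOn {W : Finset V} {e : E} (hloop : ε₁ e ≠ ε₂ e)
    (hW : ends ε₁ ε₂ e ⊆ W) (y : ℂ) :
    ∑ M ∈ matchingsOn ε₁ ε₂ W with e ∈ M, y ^ #M = y * matchingPoly ε₁ ε₂ (W \ ends ε₁ ε₂ e) y := by
  have hinj : Set.InjOn (insert e) (matchingsOn ε₁ ε₂ (W \ ends ε₁ ε₂ e) : Set (Finset E)) :=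
    fun N₁ h₁ N₂ h₂ h => by
      rw [← erase_insert (notMem_of_mem_matchingsOn_sdiff h₁),
        ← erase_insert (notMem_of_mem_matchingsOn_sdiff h₂), h]
  rw [filter_mem_matchingsOn_eq_image_insert hloop hW, sum_image hinj, matchingPoly, mul_sum]
  refine sum_congr rfl fun N hN => ?_
  rw [card_insert_of_notMem (notMem_of_mem_matchingsOn_sdiff hN), pow_succ']

lemma filter_mem_biUnion_matchingsOn_eq_biUnion (W : Finset V) (v : V) :
    {M ∈ matchingsOn ε₁ ε₂ W | v ∈ M.biUnion (ends ε₁ ε₂)} =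
      (incident ε₁ ε₂ v W).biUnion fun e => {M ∈ matchingsOn ε₁ ε₂ W | e ∈ M} := by
  ext M
  simp only [mem_filter, mem_biUnion, incident, mem_univ, true_and]
  constructor
  · rintro ⟨hM, e, he, hv⟩
    obtain ⟨⟨hloop, -⟩, hMW⟩ := mem_matchingsOn.1 hM
    exact ⟨e, ⟨hloop e he, hv, (subset_biUnion_of_mem _ he).trans hMW⟩, hM, he⟩
  · rintro ⟨e, ⟨-, hv, -⟩, hM, he⟩
    exact ⟨hM, e, he, hv⟩

lemma pairwiseDisjoint_filter_mem_matchingsOn (W : Finset V) (v : V) :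
    (incident ε₁ ε₂ v W : Set E).PairwiseDisjoint
      fun e => {M ∈ matchingsOn ε₁ ε₂ W | e ∈ M} := by
  intro e he f hf hef
  rw [Function.onFun, disjoint_filter]
  intro M hM heM hfM
  have hdisj := (mem_matchingsOn.1 hM).1.2 heM hfM hef
  simp only [incident, coe_filter, mem_univ, true_and, Set.mem_ofPred_eq] at he hf
  exact disjoint_left.1 hdisj he.2.1 hf.2.1

theorem matchingPoly_eq_erase_add_sum (W : Finset V) (v : V) (y : ℂ) :
    matchingPoly ε₁ ε₂ W y = matchingPoly ε₁ ε₂ (W.erase v) y +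
      y * ∑ e ∈ incident ε₁ ε₂ v W, matchingPoly ε₁ ε₂ ((W.erase v).erase (other ε₁ ε₂ v e)) y := by
  rw [matchingPoly, ← sum_filter_not_add_sum_filter _ (fun M => v ∈ M.biUnion (ends ε₁ ε₂)),
    ← matchingsOn_erase, filter_mem_biUnion_matchingsOn_eq_biUnion,
    sum_biUnion (pairwiseDisjoint_filter_mem_matchingsOn W v), mul_sum, matchingPoly]
  congr 1
  refine sum_congr rfl fun e he => ?_
  rw [← sdiff_ends_eq_erase_erase_other he]
  simp only [incident, mem_filter, mem_univ, true_and] at he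
  exact sum_filter_mem_matchingsOn he.1 he.2.2 y

theorem matchingPoly_ne_zero {y : ℂ} (hy : y ∈ slitPlane) (W : Finset V) :
    matchingPoly ε₁ ε₂ W y ≠ 0 := by
  rw [← cpow_ofNat_inv_pow y 2]
  exact (ne_zero_and_re_div_pos_of_recurrence (re_cpow_inv_two_pos hy)
    (by simp [matchingPoly_empty]) (fun _ _ _ _ => other_mem_erase)
    (fun W v _ => matchingPoly_eq_erase_add_sum W v _) W).1

end Matchings

end HeilmannLieb

open HeilmannLieb in
theorem univariate_heilmann_lieb_general
    {V E : Type*} [Fintype E] [DecidableEq E]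
    (ε₁ ε₂ : E → V)   -- endpoints of each edge (a loop has ε₁ e = ε₂ e)
    (IsMatching : Finset E → Prop) [DecidablePred IsMatching]
    (hmatch : ∀ M : Finset E, IsMatching M ↔
      ((∀ e ∈ M, ε₁ e ≠ ε₂ e) ∧
        ∀ e ∈ M, ∀ f ∈ M, e ≠ f →
          ε₁ e ≠ ε₁ f ∧ ε₁ e ≠ ε₂ f ∧ ε₂ e ≠ ε₁ f ∧ ε₂ e ≠ ε₂ f))
    (m : ℕ → ℕ)
    (hm : ∀ k, m k = (Finset.univ.filter
      fun M : Finset E => IsMatching M ∧ M.card = k).card)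
    (z : ℂ)
    (hz : (∑ k ∈ Finset.range (Fintype.card E + 1), (m k : ℂ) * z ^ k) = 0) :
    z.im = 0 ∧ z.re ≤ 0 := by
  classical
  set W := univ.biUnion (ends ε₁ ε₂)
  have hcount (k : ℕ) : #{M ∈ matchingsOn ε₁ ε₂ W | #M = k} = m k := by
    rw [hm]
    congr 1
    ext M
    simp only [W, mem_filter, mem_univ, true_and, mem_matchingsOn_biUnion_univ, isMatching_iff,
      hmatch]
  have hroot : matchingPoly ε₁ ε₂ W z = 0 := by
    rw [matchingPoly, sum_pow_card_eq_sum_range]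
    simpa [hcount] using hz
  by_contra hz'
  exact matchingPoly_ne_zero (mem_slitPlane_iff.2 (by grind)) W hroot

/-- The univariate Heilmann–Lieb theorem: all zeros of the matching
polynomial `μ(G;y) = Σ_k m_k(G) y^k` are real and nonpositive. -/
theorem univariate_heilmann_lieb
    {V E : Type*} [Fintype V] [Fintype E] [DecidableEq E]
    (ε₁ ε₂ : E → V)   -- endpoints of each edge (a loop has ε₁ e = ε₂ e)
    (IsMatching : Finset E → Prop) [DecidablePred IsMatching]
    (hmatch : ∀ M : Finset E, IsMatching M ↔
      ((∀ e ∈ M, ε₁ e ≠ ε₂ e) ∧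
        ∀ e ∈ M, ∀ f ∈ M, e ≠ f →
          ε₁ e ≠ ε₁ f ∧ ε₁ e ≠ ε₂ f ∧ ε₂ e ≠ ε₁ f ∧ ε₂ e ≠ ε₂ f))
    (m : ℕ → ℕ)
    (hm : ∀ k, m k = (Finset.univ.filter
      fun M : Finset E => IsMatching M ∧ M.card = k).card)
    (z : ℂ)
    (hz : (∑ k ∈ Finset.range (Fintype.card E + 1), (m k : ℂ) * z ^ k) = 0) :
    z.im = 0 ∧ z.re ≤ 0 :=
  univariate_heilmann_lieb_general ε₁ ε₂ IsMatching hmatch m hm z hz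
end

section
/- Let G = (V,E) be a finite graph with nonnegative real edge weights, and let f, g : V → ℕ satisfy f(v) ≤ g(v) ≤ f(v)+1 for each v. With activities u_k^{(v)} = 1 if f(v) ≤ k ≤ g(v) and 0 otherwise, the polynomial Z(G,λ,u;x) = Σ_{H⊆E : f(v) ≤ deg(H,v) ≤ g(v) ∀v} λ^H Π_v x_v^{deg(H,v)} is either identically zero or nonzero whenever all x_v lie in the sector {z ≠ 0 : |arg z| < π/2}. -/
/-!
For `A ⊆ V` let `Z_A` be the sum over the edge sets satisfying the degree constraints at the
vertices of `A` only. By induction on `A`, each `Z_A` is either identically zero or zero-free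
when every `x_v` has positive real part. For `A = ∅`, `Z_∅ = ∏ₑ (1 + λₑ x_{ε₁ e} x_{ε₂ e})`, and
a product `x_u x_v` of such numbers is never a negative real. Adding a vertex `a` keeps, in `Z_A`
read as a polynomial in `x_a`, only the coefficients of `x_a ^ k` with `f a ≤ k ≤ g a`: at most
two consecutive ones. A Hurwitz-type argument shows that each coefficient is identically zero or
zero-free, and differentiation in `x_a` (Gauss–Lucas) together with reversal of the coefficient
sequence turns two consecutive coefficients `c_k, c_{k+1}` into a stable linear polynomial.
Finally, as `λ ≥ 0`, if `Z` vanishes at `x = 1` then every term of `Z` vanishes.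
-/

open Polynomial Filter Topology

namespace Polynomial

def IsHalfPlaneStable (p : ℂ[X]) : Prop :=
  ∀ z : ℂ, 0 < z.re → p.eval z ≠ 0

namespace IsHalfPlaneStable

variable {p : ℂ[X]}

theorem ne_zero (hp : p.IsHalfPlaneStable) : p ≠ 0 := by
  rintro rfl
  exact hp 1 (by simp) eval_zero

theorem derivative (hp : p.IsHalfPlaneStable) (hdeg : 0 < p.natDegree) :
    (derivative p).IsHalfPlaneStable := by
  intro z hz hzero
  have hroots : p.rootSet ℂ ⊆ {w : ℂ | w.re ≤ 0} := fun w hw =>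
    not_lt.1 fun hw' => hp w hw' (by simpa using (mem_rootSet.1 hw).2)
  have hz' : z ∈ (Polynomial.derivative p).rootSet ℂ :=
    mem_rootSet.2 ⟨by simpa using hdeg.ne', by simpa using hzero⟩
  exact (not_lt.2 <| convexHull_min hroots (convex_halfSpace_re_le 0)
    (rootSet_derivative_subset_convexHull_rootSet (natDegree_pos_iff_degree_pos.1 hdeg) hz')) hz

theorem iterate_derivative (hp : p.IsHalfPlaneStable) {j : ℕ} (hj : j ≤ p.natDegree) :
    (Polynomial.derivative^[j] p).IsHalfPlaneStable := by
  induction j generalizing p with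
  | zero => exact hp
  | succ j ih =>
    rw [Function.iterate_succ_apply]
    exact ih (hp.derivative (by omega)) (by rw [natDegree_derivative]; omega)

theorem reflect (hp : p.IsHalfPlaneStable) {N : ℕ} (hN : p.natDegree ≤ N) :
    (p.reflect N).IsHalfPlaneStable := by
  intro z hz hzero
  have hz0 : z ≠ 0 := by rintro rfl; simp at hz
  let := invertibleOfNonzero (inv_ne_zero hz0)
  have h := eval₂_reflect_mul_pow (RingHom.id ℂ) z⁻¹ N p hN
  rw [invOf_eq_inv, inv_inv, eval₂_id, eval₂_id, hzero, zero_mul] at h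
  exact hp z⁻¹ (by simpa [Complex.inv_re] using div_pos hz (Complex.normSq_pos.2 hz0)) h.symm

/-- With `M = natDegree p - f`: `f` derivatives followed by reflection in degree `M` turn `p` into
a stable `q` of degree `M` with `q_M ∝ c_f` and `q_{M-1} ∝ c_{f+1}`, and `M - 1` further
derivatives leave the stable linear polynomial `a c_{f+1} + b c_f w`. -/
theorem exists_stable_linear_of_coeff_ne_zero (hp : p.IsHalfPlaneStable) {f : ℕ}
    (hf : f < p.natDegree) (hc : p.coeff f ≠ 0) :
    ∃ a b : ℕ, 0 < a ∧ 0 < b ∧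
      ∀ w : ℂ, 0 < w.re → (a : ℂ) * p.coeff (f + 1) + b * p.coeff f * w ≠ 0 := by
  set M := p.natDegree - f
  set q := (Polynomial.derivative^[f] p).reflect M
  have hq : q.IsHalfPlaneStable :=
    (hp.iterate_derivative hf.le).reflect (natDegree_iterate_derivative p f)
  have hq_coeff : ∀ i ≤ M,
      q.coeff i = ((M - i + f).descFactorial f : ℂ) * p.coeff (M - i + f) :=
    fun i hi => by rw [coeff_reflect, revAt_le hi, coeff_iterate_derivative, nsmul_eq_mul]
  have hq_deg : q.natDegree = M := by
    refine le_antisymm (natDegree_reflect_le.trans (max_le le_rfl ?_))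
      (le_natDegree_of_ne_zero ?_)
    · exact natDegree_iterate_derivative p f
    · rw [hq_coeff M le_rfl, Nat.sub_self, zero_add]
      exact mul_ne_zero (by simp [Nat.descFactorial_self, Nat.factorial_ne_zero]) hc
  set r := Polynomial.derivative^[M - 1] q
  have hr : r.IsHalfPlaneStable := hq.iterate_derivative (by omega)
  refine ⟨(M - 1).descFactorial (M - 1) * (1 + f).descFactorial f,
    M.descFactorial (M - 1) * f.descFactorial f, ?_, ?_, fun w hw => ?_⟩
  · simp only [Nat.pos_iff_ne_zero, mul_ne_zero_iff, Ne, Nat.descFactorial_eq_zero_iff_lt]; omega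
  · simp only [Nat.pos_iff_ne_zero, mul_ne_zero_iff, Ne, Nat.descFactorial_eq_zero_iff_lt]; omega
  have hr_deg : r.natDegree < 2 := (natDegree_iterate_derivative q (M - 1)).trans_lt (by omega)
  convert hr w hw using 1
  rw [eval_eq_sum_range' hr_deg, Finset.sum_range_succ, Finset.sum_range_one,
    coeff_iterate_derivative, coeff_iterate_derivative, hq_coeff _ (by omega),
    hq_coeff _ (by omega), show M - (0 + (M - 1)) + f = 1 + f by omega,
    show 1 + (M - 1) = M by omega, Nat.sub_self, zero_add, add_comm f 1]
  simp only [nsmul_eq_mul, Nat.cast_mul, zero_add, pow_zero, pow_one]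
  ring

theorem coeff_add_coeff_mul_ne_zero (hp : p.IsHalfPlaneStable) {f : ℕ} (hc : p.coeff f ≠ 0)
    {z : ℂ} (hz : 0 < z.re) : p.coeff f + p.coeff (f + 1) * z ≠ 0 := by
  rcases (le_natDegree_of_ne_zero hc).lt_or_eq with hf | hf
  swap
  · rwa [coeff_eq_zero_of_natDegree_lt (show p.natDegree < f + 1 by omega), zero_mul, add_zero]
  obtain ⟨a, b, ha, hb, hlin⟩ := hp.exists_stable_linear_of_coeff_ne_zero hf hc
  have hz0 : z ≠ 0 := by rintro rfl; simp at hz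
  have hb0 : (b : ℂ) ≠ 0 := by exact_mod_cast hb.ne'
  intro hzero
  refine hlin ((a / b : ℝ) * z⁻¹) ?_ ?_
  · rw [Complex.re_ofReal_mul, Complex.inv_re]
    exact mul_pos (by positivity) (div_pos hz (Complex.normSq_pos.2 hz0))
  · push_cast
    field_simp
    linear_combination (a : ℂ) * hzero

end IsHalfPlaneStable

theorem norm_eval_le_two_pow_mul_norm_eval_zero_s13 {q : ℂ[X]} {ρ : ℝ}
    (hroots : ∀ a ∈ q.roots, ρ < ‖a‖) {z : ℂ} (hz : ‖z‖ ≤ ρ) :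
    ‖q.eval z‖ ≤ 2 ^ q.natDegree * ‖q.eval 0‖ := by
  have hnorm : ∀ w : ℂ,
      ‖q.eval w‖ = ‖q.leadingCoeff‖ * (q.roots.map fun a => ‖w - a‖).prod := by
    intro w
    rw [(IsAlgClosed.splits q).eval_eq_prod_roots, norm_mul]
    congr 1
    simpa using map_multiset_prod (normHom : ℂ →*₀ ℝ) (q.roots.map (w - ·))
  have hfactor :
      (q.roots.map fun a => ‖z - a‖).prod ≤ (q.roots.map fun a => 2 * ‖0 - a‖).prod :=
    Multiset.prod_map_le_prod_map₀ _ _ (fun _ _ => norm_nonneg _) fun a ha => by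
      have := norm_sub_le z a
      have := hroots a ha
      rw [zero_sub, norm_neg]
      linarith
  rw [Multiset.prod_map_mul, Multiset.map_const', Multiset.prod_replicate] at hfactor
  calc ‖q.eval z‖
      ≤ ‖q.leadingCoeff‖ * (2 ^ q.roots.card * (q.roots.map fun a => ‖0 - a‖).prod) := by
        rw [hnorm]; gcongr
    _ ≤ 2 ^ q.natDegree * ‖q.eval 0‖ := by
        rw [hnorm, mul_left_comm]
        gcongr
        · exact mul_nonneg (norm_nonneg _) (Multiset.prod_nonneg fun _ h => by
            obtain ⟨a, -, rfl⟩ := Multiset.mem_map.1 h; exact norm_nonneg _)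
        · norm_num
        · exact card_roots' q

theorem natDegree_eval_C_le {R : Type*} [CommSemiring R] (B : R[X][X]) (w : R) :
    (B.eval (C w)).natDegree ≤ B.support.sup fun i => (B.coeff i).natDegree := by
  rw [eval_eq_sum, Polynomial.sum_def]
  refine natDegree_sum_le_of_forall_le _ _ fun i hi => ?_
  rw [← C_pow]
  exact (natDegree_mul_C_le _ _).trans (Finset.le_sup (f := fun i => (B.coeff i).natDegree) hi)

end Polynomial

theorem Finset.prod_comp_eq_prod_pow_card {ι κ M : Type*} [Fintype κ] [DecidableEq κ]
    [CommMonoid M] (s : Finset ι) (g : ι → κ) (f : κ → M) :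
    ∏ i ∈ s, f (g i) = ∏ k, f k ^ (s.filter fun i => g i = k).card := by
  rw [Finset.prod_comp]
  refine Finset.prod_subset (Finset.subset_univ _) fun k _ hk => ?_
  rw [Finset.filter_false_of_mem fun i hi (h : g i = k) => hk (h ▸ Finset.mem_image_of_mem g hi),
    Finset.card_empty, pow_zero]

theorem Fintype.prod_update_pow {V M : Type*} [Fintype V] [DecidableEq V] [CommMonoid M]
    (x : V → M) (a : V) (z : M) (m : V → ℕ) :
    ∏ v, Function.update x a z v ^ m v = z ^ m a * ∏ v ∈ Finset.univ.erase a, x v ^ m v := by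
  rw [← Finset.mul_prod_erase _ _ (Finset.mem_univ a), Function.update_self]
  congr 1
  exact Finset.prod_congr rfl fun v hv => by
    rw [Function.update_of_ne (Finset.ne_of_mem_erase hv)]

theorem Complex.one_add_ofReal_mul_mul_ne_zero {t : ℝ} (ht : 0 ≤ t) {a b : ℂ} (ha : 0 < a.re)
    (hb : 0 < b.re) : 1 + t * (a * b) ≠ 0 := by
  intro h
  rcases ht.eq_or_lt with rfl | ht
  · simp at h
  have ha0 : a ≠ 0 := by rintro rfl; simp at ha
  have ht0 : (t : ℂ) ≠ 0 := by exact_mod_cast ht.ne'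
  have hta : (t : ℂ) * a ≠ 0 := mul_ne_zero ht0 ha0
  have hb' : b = -(t * a)⁻¹ := by
    field_simp
    linear_combination h
  have : 0 < ((t * a)⁻¹).re := by
    rw [Complex.inv_re, Complex.re_ofReal_mul]
    exact div_pos (mul_pos ht ha) (Complex.normSq_pos.2 hta)
  rw [hb', Complex.neg_re] at hb
  linarith

def rightHalfPlanes (V : Type*) : Set (V → ℂ) :=
  {x | ∀ v, 0 < (x v).re}

section HalfPlaneStability

variable {V : Type*}

theorem update_mem_rightHalfPlanes [DecidableEq V] {x : V → ℂ} (hx : x ∈ rightHalfPlanes V)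
    (a : V) {z : ℂ} (hz : 0 < z.re) : Function.update x a z ∈ rightHalfPlanes V :=
  (Function.forall_update_iff x (p := fun _ w => 0 < w.re)).2 ⟨hz, fun v _ => hx v⟩

theorem eventually_add_mul_mem_rightHalfPlanes [Finite V] {x : V → ℂ}
    (hx : x ∈ rightHalfPlanes V) (y : V → ℂ) :
    ∀ᶠ s in 𝓝 (0 : ℂ), (fun v => x v + s * y v) ∈ rightHalfPlanes V := by
  refine eventually_all.2 fun v => ?_
  have : Continuous fun s : ℂ => (x v + s * y v).re := by fun_prop
  exact continuousAt_const.eventually_lt this.continuousAt (by simpa using hx v)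

theorem exists_bivariate_eq_eval_line (P : (MvPolynomial V ℂ)[X]) (x y : V → ℂ) :
    ∃ B : ℂ[X][X], ∀ s w : ℂ,
      (B.eval (C w)).eval s = (P.map (MvPolynomial.eval fun v => x v + s * y v)).eval w := by
  refine ⟨P.map (MvPolynomial.eval₂Hom C fun v => C (x v) + C (y v) * X), fun s w => ?_⟩
  rw [← evalEval, ← map_evalRingHom_eval, Polynomial.map_map]
  congr 2
  refine MvPolynomial.ringHom_ext (fun c => by simp) fun v => ?_
  simp [mul_comm (y v)]

def IsHalfPlaneStableFamily (P : (MvPolynomial V ℂ)[X]) : Prop :=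
  ∀ x ∈ rightHalfPlanes V, (P.map (MvPolynomial.eval x)).IsHalfPlaneStable

namespace IsHalfPlaneStableFamily

variable {P : (MvPolynomial V ℂ)[X]}

theorem reflect (hP : IsHalfPlaneStableFamily P) {N : ℕ}
    (hN : ∀ x ∈ rightHalfPlanes V, (P.map (MvPolynomial.eval x)).natDegree ≤ N) :
    IsHalfPlaneStableFamily (P.reflect N) := fun x hx => by
  rw [← reflect_map]
  exact (hP x hx).reflect (hN x hx)

theorem iterate_derivative (hP : IsHalfPlaneStableFamily P) {j : ℕ}
    (hj : ∀ x ∈ rightHalfPlanes V, j ≤ (P.map (MvPolynomial.eval x)).natDegree) :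
    IsHalfPlaneStableFamily (Polynomial.derivative^[j] P) := fun x hx => by
  rw [← iterate_derivative_map]
  exact (hP x hx).iterate_derivative (hj x hx)

/-- A Hurwitz-type argument at the boundary point `0` of the half-plane. On the line `ℓ s` from
`x₀` to `x₁`, for every `w` with `0 < w.re` the polynomial `s ↦ P(ℓ s)(w)`, of degree at most
`M`, has no roots in a disc around `s = 0` on which `ℓ s` stays in the domain, so its values on
the disc are at most `2 ^ M` times its value at `s = 0`. This bound passes to the limit `w → 0`,
where `s ↦ P(ℓ s)(0)` does not vanish identically. -/
theorem eval_coeff_zero_ne_zero [Finite V] (hP : IsHalfPlaneStableFamily P) {x₀ x₁ : V → ℂ}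
    (hx₀ : x₀ ∈ rightHalfPlanes V) (h₁ : MvPolynomial.eval x₁ (P.coeff 0) ≠ 0) :
    MvPolynomial.eval x₀ (P.coeff 0) ≠ 0 := by
  set ℓ : ℂ → V → ℂ := fun s v => x₀ v + s * (x₁ - x₀) v
  obtain ⟨ρ, hρ, hℓ⟩ := Metric.nhds_basis_closedBall.eventually_iff.1
    (eventually_add_mul_mem_rightHalfPlanes hx₀ (x₁ - x₀))
  obtain ⟨B, hB⟩ := exists_bivariate_eq_eval_line P x₀ (x₁ - x₀)
  set M := B.support.sup fun i => (B.coeff i).natDegree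
  obtain ⟨z₁, hz₁, hz₁0⟩ : ∃ z₁ ∈ Metric.closedBall (0 : ℂ) ρ, (B.eval (C 0)).eval z₁ ≠ 0 := by
    by_contra! h
    have h0 : B.eval (C 0) = 0 := eq_zero_of_infinite_isRoot _
      ((infinite_of_mem_nhds 0 (Metric.closedBall_mem_nhds 0 hρ)).mono h)
    have h1 := congrArg (eval 1) h0
    rw [hB] at h1
    exact h₁ (by simpa [ℓ, coeff_zero_eq_eval_zero] using h1)
  rw [hB] at hz₁0
  have hℓ0 : ℓ 0 = x₀ := by ext; simp [ℓ]
  have hbound : ∀ w ∈ {w : ℂ | 0 < w.re}, ‖(P.map (MvPolynomial.eval (ℓ z₁))).eval w‖ ≤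
      2 ^ M * ‖(P.map (MvPolynomial.eval x₀)).eval w‖ := by
    intro w hw
    rw [← hℓ0, ← hB, ← hB]
    refine (norm_eval_le_two_pow_mul_norm_eval_zero_s13 (fun a ha => ?_) (by simpa using hz₁)).trans
      (by gcongr; exacts [one_le_two, natDegree_eval_C_le B w])
    by_contra! hle
    refine hP (ℓ a) (hℓ (by simpa using hle)) w hw ?_
    rw [← hB]
    exact (mem_roots'.1 ha).2
  have hclosed : IsClosed {w : ℂ | ‖(P.map (MvPolynomial.eval (ℓ z₁))).eval w‖ ≤
      2 ^ M * ‖(P.map (MvPolynomial.eval x₀)).eval w‖} :=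
    isClosed_le (Polynomial.continuous _).norm
      (continuous_const.mul (Polynomial.continuous _).norm)
  have h0 : ‖(P.map (MvPolynomial.eval (ℓ z₁))).eval 0‖ ≤
      2 ^ M * ‖(P.map (MvPolynomial.eval x₀)).eval 0‖ :=
    closure_minimal hbound hclosed (by simp : (0 : ℂ) ∈ closure {w : ℂ | 0 < w.re})
  rw [← coeff_map, coeff_zero_eq_eval_zero]
  intro h
  rw [h, norm_zero, mul_zero] at h0
  exact hz₁0 (norm_le_zero_iff.1 h0)

theorem eval_coeff_ne_zero_of_natDegree_le [Finite V] (hP : IsHalfPlaneStableFamily P) {N : ℕ}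
    (hN : ∀ x ∈ rightHalfPlanes V, (P.map (MvPolynomial.eval x)).natDegree ≤ N)
    {x₀ x₁ : V → ℂ} (hx₀ : x₀ ∈ rightHalfPlanes V) (h₁ : MvPolynomial.eval x₁ (P.coeff N) ≠ 0) :
    MvPolynomial.eval x₀ (P.coeff N) ≠ 0 := by
  have := (hP.reflect hN).eval_coeff_zero_ne_zero hx₀ (x₁ := x₁)
  simp only [coeff_reflect, revAt_zero] at this
  exact this h₁

theorem eval_coeff_eq_zero_or_ne_zero [Finite V] (hP : IsHalfPlaneStableFamily P) (k : ℕ) :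
    (∀ x ∈ rightHalfPlanes V, MvPolynomial.eval x (P.coeff k) = 0) ∨
      ∀ x ∈ rightHalfPlanes V, MvPolynomial.eval x (P.coeff k) ≠ 0 := by
  set degrees := (fun x => (P.map (MvPolynomial.eval x)).natDegree) '' rightHalfPlanes V
  have hbdd : BddAbove degrees := ⟨P.natDegree, by rintro _ ⟨x, -, rfl⟩; exact natDegree_map_le⟩
  have h_one : (1 : V → ℂ) ∈ rightHalfPlanes V := fun _ => by simp
  obtain ⟨x₁, hx₁, hx₁_deg⟩ : sSup degrees ∈ degrees :=
    Nat.sSup_mem ⟨_, Set.mem_image_of_mem _ h_one⟩ hbdd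
  set D := sSup degrees
  have hle : ∀ x ∈ rightHalfPlanes V, (P.map (MvPolynomial.eval x)).natDegree ≤ D :=
    fun x hx => le_csSup hbdd ⟨x, hx, rfl⟩
  have hdeg : ∀ x ∈ rightHalfPlanes V, (P.map (MvPolynomial.eval x)).natDegree = D := by
    refine fun x hx => le_antisymm (hle x hx) (le_natDegree_of_ne_zero ?_)
    rw [coeff_map]
    refine hP.eval_coeff_ne_zero_of_natDegree_le hle hx (x₁ := x₁) ?_
    rw [← coeff_map, ← hx₁_deg]
    exact leadingCoeff_ne_zero.2 (hP x₁ hx₁).ne_zero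
  rcases lt_or_ge D k with hk | hk
  · refine Or.inl fun x hx => ?_
    rw [← coeff_map]
    exact coeff_eq_zero_of_natDegree_lt (hdeg x hx ▸ hk)
  by_cases h : ∀ x ∈ rightHalfPlanes V, MvPolynomial.eval x (P.coeff k) = 0
  · exact Or.inl h
  obtain ⟨x₂, -, hx₂⟩ := not_forall₂.1 h
  refine Or.inr fun x hx => ?_
  have := (hP.iterate_derivative fun x hx => (hdeg x hx).symm ▸ hk).eval_coeff_zero_ne_zero hx
    (x₁ := x₂)
  simpa [coeff_iterate_derivative, Nat.descFactorial_self, Nat.factorial_ne_zero, hx₂] using this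

theorem eval_window_eq_zero_or_ne_zero [Finite V] (hP : IsHalfPlaneStableFamily P) {f g : ℕ}
    (hfg : f ≤ g ∧ g ≤ f + 1) :
    (∀ x ∈ rightHalfPlanes V, ∀ k ∈ Finset.Icc f g, MvPolynomial.eval x (P.coeff k) = 0) ∨
      ∀ x ∈ rightHalfPlanes V, ∀ z : ℂ, 0 < z.re →
        ∑ k ∈ Finset.Icc f g, MvPolynomial.eval x (P.coeff k) * z ^ k ≠ 0 := by
  have hz0 : ∀ z : ℂ, 0 < z.re → z ≠ 0 := by rintro z hz rfl; simp at hz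
  obtain hg | hg : g = f ∨ g = f + 1 := by omega
  all_goals subst g
  · simp only [Finset.Icc_self, Finset.sum_singleton, Finset.mem_singleton, forall_eq]
    refine (hP.eval_coeff_eq_zero_or_ne_zero f).imp id fun h x hx z hz => ?_
    exact mul_ne_zero (h x hx) (pow_ne_zero _ (hz0 z hz))
  have hIcc : Finset.Icc f (f + 1) = {f, f + 1} := by ext; simp; omega
  simp only [hIcc, Finset.sum_pair (Nat.ne_add_one f), Finset.mem_insert, Finset.mem_singleton,
    forall_eq_or_imp, forall_eq]
  rcases hP.eval_coeff_eq_zero_or_ne_zero f with h₀ | h₀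
  · refine (hP.eval_coeff_eq_zero_or_ne_zero (f + 1)).imp (fun h₁ x hx => ⟨h₀ x hx, h₁ x hx⟩)
      fun h₁ x hx z hz => ?_
    rw [h₀ x hx, zero_mul, zero_add]
    exact mul_ne_zero (h₁ x hx) (pow_ne_zero _ (hz0 z hz))
  refine Or.inr fun x hx z hz => ?_
  have h := (hP x hx).coeff_add_coeff_mul_ne_zero (f := f) (by rw [coeff_map]; exact h₀ x hx) hz
  rw [coeff_map, coeff_map] at h
  convert mul_ne_zero (pow_ne_zero f (hz0 z hz)) h using 1
  ring

end IsHalfPlaneStableFamily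

variable [Fintype V] {ι : Type*}

def monomialSum (s : Finset ι) (c : ι → ℂ) (m : ι → V → ℕ) (x : V → ℂ) : ℂ :=
  ∑ i ∈ s, c i * ∏ v, x v ^ m i v

def IsZeroOrNonvanishing (F : (V → ℂ) → ℂ) : Prop :=
  (∀ x ∈ rightHalfPlanes V, F x = 0) ∨ ∀ x ∈ rightHalfPlanes V, F x ≠ 0

section PolyIn

variable [DecidableEq V] (a : V) (s : Finset ι) (c : ι → ℂ) (m : ι → V → ℕ)

noncomputable def monomialSumPolyIn : (MvPolynomial V ℂ)[X] :=
  ∑ i ∈ s, monomial (m i a)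
    (MvPolynomial.C (c i) * ∏ v ∈ Finset.univ.erase a, MvPolynomial.X v ^ m i v)

theorem map_eval_monomialSumPolyIn (x : V → ℂ) :
    (monomialSumPolyIn a s c m).map (MvPolynomial.eval x) =
      ∑ i ∈ s, monomial (m i a) (c i * ∏ v ∈ Finset.univ.erase a, x v ^ m i v) := by
  simp [monomialSumPolyIn, Polynomial.map_sum]

theorem eval_map_eval_monomialSumPolyIn (x : V → ℂ) (z : ℂ) :
    ((monomialSumPolyIn a s c m).map (MvPolynomial.eval x)).eval z =
      monomialSum s c m (Function.update x a z) := by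
  simp only [map_eval_monomialSumPolyIn, eval_finsetSum, eval_monomial, monomialSum,
    Fintype.prod_update_pow]
  exact Finset.sum_congr rfl fun i _ => by ring

theorem monomialSum_filter_eq_sum_coeff (t : Finset ℕ) (x : V → ℂ) :
    monomialSum (s.filter fun i => m i a ∈ t) c m x =
      ∑ k ∈ t, MvPolynomial.eval x ((monomialSumPolyIn a s c m).coeff k) * x a ^ k := by
  simp only [← coeff_map, map_eval_monomialSumPolyIn, finsetSum_coeff, coeff_monomial,
    Finset.sum_mul, ite_mul, zero_mul]
  rw [Finset.sum_comm, monomialSum, Finset.sum_filter]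
  refine Finset.sum_congr rfl fun i _ => ?_
  have hsplit := Fintype.prod_update_pow x a (x a) (m i)
  rw [Function.update_eq_self] at hsplit
  rw [Finset.sum_ite_eq, hsplit, mul_left_comm, mul_comm]

end PolyIn

theorem IsZeroOrNonvanishing.monomialSum_filter [DecidableEq V] {s : Finset ι} {c : ι → ℂ}
    {m : ι → V → ℕ} (h : IsZeroOrNonvanishing (monomialSum s c m)) (a : V) {f g : ℕ}
    (hfg : f ≤ g ∧ g ≤ f + 1) :
    IsZeroOrNonvanishing (monomialSum (s.filter fun i => m i a ∈ Finset.Icc f g) c m) := by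
  set P := monomialSumPolyIn a s c m
  simp only [IsZeroOrNonvanishing, monomialSum_filter_eq_sum_coeff]
  rcases h with h | h
  · refine Or.inl fun x hx => Finset.sum_eq_zero fun k _ => ?_
    have hzero : P.map (MvPolynomial.eval x) = 0 := by
      refine eq_zero_of_infinite_isRoot _ ((infinite_of_mem_nhds 1
        ((isOpen_lt continuous_const Complex.continuous_re).mem_nhds
          (show (0 : ℝ) < (1 : ℂ).re by simp))).mono fun z hz => ?_)
      exact (eval_map_eval_monomialSumPolyIn a s c m x z).trans
        (h _ (update_mem_rightHalfPlanes hx a hz))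
    rw [← coeff_map, hzero, coeff_zero, zero_mul]
  · have hP : IsHalfPlaneStableFamily P := fun x hx z hz => by
      rw [eval_map_eval_monomialSumPolyIn]
      exact h _ (update_mem_rightHalfPlanes hx a hz)
    refine (hP.eval_window_eq_zero_or_ne_zero hfg).imp (fun h' x hx => ?_) fun h' x hx => ?_
    · exact Finset.sum_eq_zero fun k hk => by rw [h' x hx k hk, zero_mul]
    · exact h' x hx (x a) (hx a)

theorem IsZeroOrNonvanishing.monomialSum_filter_forall_mem [DecidableEq V] {s : Finset ι}
    {c : ι → ℂ} {m : ι → V → ℕ} (h : IsZeroOrNonvanishing (monomialSum s c m)) {f g : V → ℕ}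
    (hfg : ∀ v, f v ≤ g v ∧ g v ≤ f v + 1) (A : Finset V) :
    IsZeroOrNonvanishing
      (monomialSum (s.filter fun i => ∀ v ∈ A, m i v ∈ Finset.Icc (f v) (g v)) c m) := by
  induction A using Finset.induction_on with
  | empty => simpa using h
  | insert a A _ ih =>
    convert ih.monomialSum_filter a (hfg a) using 2
    rw [Finset.filter_filter]
    exact Finset.filter_congr fun i _ => by rw [Finset.forall_mem_insert, and_comm]

theorem monomialSum_eq_zero_of_nonneg_of_one {s : Finset ι} {c : ι → ℝ} (hc : ∀ i ∈ s, 0 ≤ c i)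
    {m : ι → V → ℕ} (h : monomialSum s (fun i => (c i : ℂ)) m 1 = 0) (x : V → ℂ) :
    monomialSum s (fun i => (c i : ℂ)) m x = 0 := by
  simp only [monomialSum, Pi.one_apply, one_pow, Finset.prod_const_one, mul_one] at h
  rw [← Complex.ofReal_sum, Complex.ofReal_eq_zero, Finset.sum_eq_zero_iff_of_nonneg hc] at h
  exact Finset.sum_eq_zero fun i hi => by simp [h i hi]

end HalfPlaneStability

theorem monomialSum_univ_edge_ne_zero {V E : Type*} [Fintype V] [DecidableEq V] [Fintype E]
    (ε₁ ε₂ : E → V) (deg : Finset E → V → ℕ)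
    (hdeg : ∀ (H : Finset E) (v : V),
      deg H v = (H.filter fun e => ε₁ e = v).card + (H.filter fun e => ε₂ e = v).card)
    {lam : E → ℝ} (hlam : ∀ e, 0 ≤ lam e) {x : V → ℂ} (hx : x ∈ rightHalfPlanes V) :
    monomialSum Finset.univ (fun H => ∏ e ∈ H, (lam e : ℂ)) deg x ≠ 0 := by
  have hprod : monomialSum Finset.univ (fun H => ∏ e ∈ H, (lam e : ℂ)) deg x =
      ∏ e, (1 + lam e * (x (ε₁ e) * x (ε₂ e))) := by
    rw [Finset.prod_one_add, Finset.powerset_univ, monomialSum]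
    refine Finset.sum_congr rfl fun H _ => ?_
    rw [Finset.prod_mul_distrib, Finset.prod_mul_distrib, Finset.prod_comp_eq_prod_pow_card H ε₁,
      Finset.prod_comp_eq_prod_pow_card H ε₂, ← Finset.prod_mul_distrib]
    simp only [← pow_add, hdeg]
  rw [hprod, Finset.prod_ne_zero_iff]
  exact fun e _ => Complex.one_add_ofReal_mul_mul_ne_zero (hlam e) (hx _) (hx _)

open Real

theorem degree_constrained_nonvanishing_general
    {V E : Type*} [Fintype V] [DecidableEq V] [Fintype E]
    (ε₁ ε₂ : E → V)
    (deg : Finset E → V → ℕ)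
    (hdeg : ∀ (H : Finset E) (v : V),
      deg H v = (H.filter fun e => ε₁ e = v).card + (H.filter fun e => ε₂ e = v).card)
    (lam : E → ℝ) (hlam : ∀ e, 0 ≤ lam e)
    (f g : V → ℕ) (hfg : ∀ v, f v ≤ g v ∧ g v ≤ f v + 1)
    (Z : (V → ℂ) → ℂ)
    (hZ : ∀ x : V → ℂ, Z x =
      ∑ H ∈ Finset.univ.filter
        (fun H : Finset E => ∀ v, f v ≤ deg H v ∧ deg H v ≤ g v),
        (∏ e ∈ H, (lam e : ℂ)) * ∏ v : V, x v ^ deg H v) :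
    (∀ x : V → ℂ, Z x = 0) ∨
      (∀ x : V → ℂ, (∀ v, x v ≠ 0 ∧ |(x v).arg| < π / 2) → Z x ≠ 0) := by
  set S := Finset.univ.filter fun H : Finset E =>
    ∀ v ∈ Finset.univ, deg H v ∈ Finset.Icc (f v) (g v)
  have hZS : ∀ x, Z x = monomialSum S (fun H => ((∏ e ∈ H, lam e : ℝ) : ℂ)) deg x := by
    intro x
    rw [hZ, monomialSum]
    push_cast
    exact Finset.sum_congr (Finset.filter_congr fun H _ => by simp) fun _ _ => rfl
  have hS : IsZeroOrNonvanishing (monomialSum S (fun H => ((∏ e ∈ H, lam e : ℝ) : ℂ)) deg) := by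
    refine IsZeroOrNonvanishing.monomialSum_filter_forall_mem (Or.inr fun x hx => ?_) hfg _
    simpa using monomialSum_univ_edge_ne_zero ε₁ ε₂ deg hdeg hlam hx
  refine hS.imp (fun h x => ?_) fun h x hx => ?_
  · rw [hZS]
    exact monomialSum_eq_zero_of_nonneg_of_one
      (fun H _ => Finset.prod_nonneg fun e _ => hlam e) (h 1 fun _ => by simp) x
  · rw [hZS]
    exact h x fun v => (Complex.abs_arg_lt_pi_div_two_iff.1 (hx v).2).resolve_right (hx v).1

/-- Example 4.2 (Wagner): spanning subgraphs with degree at each vertex `v`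
constrained to lie in `[f v, g v]` with `g v ≤ f v + 1`. -/
theorem degree_constrained_nonvanishing
    {V E : Type*} [Fintype V] [DecidableEq V] [Fintype E] [DecidableEq E]
    (ε₁ ε₂ : E → V)
    (deg : Finset E → V → ℕ)
    (hdeg : ∀ (H : Finset E) (v : V),
      deg H v = (H.filter fun e => ε₁ e = v).card + (H.filter fun e => ε₂ e = v).card)
    (lam : E → ℝ) (hlam : ∀ e, 0 ≤ lam e)
    (f g : V → ℕ) (hfg : ∀ v, f v ≤ g v ∧ g v ≤ f v + 1)
    (Z : (V → ℂ) → ℂ)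
    (hZ : ∀ x : V → ℂ, Z x =
      ∑ H ∈ Finset.univ.filter
        (fun H : Finset E => ∀ v, f v ≤ deg H v ∧ deg H v ≤ g v),
        (∏ e ∈ H, (lam e : ℂ)) * ∏ v : V, x v ^ deg H v) :
    (∀ x : V → ℂ, Z x = 0) ∨
      (∀ x : V → ℂ, (∀ v, x v ≠ 0 ∧ |(x v).arg| < π / 2) → Z x ≠ 0) :=
  degree_constrained_nonvanishing_general ε₁ ε₂ deg hdeg lam hlam f g hfg Z hZ
end

section
/- Let F(y) = Σ_j N_j y^j be a polynomial with nonnegative real coefficients all of whose complex zeros z satisfy |arg z| ≥ 2π/3 (equivalently, F has no zeros in the open sector {z ≠ 0 : |arg z| < 2π/3}). Then the coefficient sequence (N_j) is logarithmically concave with no internal zeros: N_j² ≥ N_{j+1} N_{j−1} for all j, and if N_i ≠ 0 and N_k ≠ 0 with i ≤ j ≤ k then N_j ≠ 0. -/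
open Real Polynomial

/-!
Factor `P` over `ℝ`. In the sector `|arg z| ≥ 2π/3` we have `‖z‖ ≤ -2 Re z`, so every real root
is `≤ 0` and every pair of non-real roots `z, z̄` gives a factor `X² + bX + c` with
`b = -2 Re z ≥ 0` and `0 ≤ c = ‖z‖² ≤ b²`. Multiplying by `γX² + βX + α` with nonnegative
coefficients and `αγ ≤ β²` preserves nonnegative log-concave coefficient sequences without
internal zeros: the log-concavity defect of the product is a nonnegative combination of the
inequalities `f (b - 1) * f (c + 1) ≤ f b * f c` (`b ≤ c`), which hold for such `f`.
-/

open Function Set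

namespace Polynomial

variable {R : Type*} [Semiring R]

-- Indexing by `ℤ` turns multiplication by `X` into a plain shift, without a boundary case.
def intCoeff (p : R[X]) : ℤ → R
  | .ofNat n => p.coeff n
  | .negSucc _ => 0

@[simp]
lemma intCoeff_add (p q : R[X]) (n : ℤ) : (p + q).intCoeff n = p.intCoeff n + q.intCoeff n := by
  cases n <;> simp [intCoeff]

@[simp]
lemma intCoeff_C_mul (a : R) (p : R[X]) (n : ℤ) : (C a * p).intCoeff n = a * p.intCoeff n := by
  cases n <;> simp [intCoeff]

@[simp]
lemma intCoeff_X_mul (p : R[X]) (n : ℤ) : (X * p).intCoeff n = p.intCoeff (n - 1) := by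
  rcases n with (_ | n) | n
  · exact coeff_X_mul_zero p
  · rw [Int.ofNat_eq_natCast, Nat.cast_succ, add_sub_cancel_right]
    exact coeff_X_mul p n
  · rfl

lemma intCoeff_quadratic_mul (α β γ : R) (p : R[X]) (n : ℤ) :
    ((C γ * X ^ 2 + C β * X + C α) * p).intCoeff n =
      γ * p.intCoeff (n - 2) + β * p.intCoeff (n - 1) + α * p.intCoeff n := by
  rw [show (C γ * X ^ 2 + C β * X + C α) * p = C γ * (X * (X * p)) + C β * (X * p) + C α * p by
    noncomm_ring]
  simp only [intCoeff_add, intCoeff_C_mul, intCoeff_X_mul, sub_sub, one_add_one_eq_two]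

end Polynomial

lemma ordConnected_support_sum_mul {f w : ℤ → ℝ} {A : Finset ℤ} (hf : ∀ n, 0 ≤ f n)
    (hw : ∀ s, 0 ≤ w s) (hf' : (support f).OrdConnected) (hw' : (support w).OrdConnected)
    (hA : support w ⊆ A) : (support fun n => ∑ s ∈ A, w s * f (n - s)).OrdConnected := by
  have mem : ∀ n, n ∈ support (fun n => ∑ s ∈ A, w s * f (n - s)) ↔
      ∃ s, w s ≠ 0 ∧ f (n - s) ≠ 0 := by
    intro n
    simp only [mem_support, ne_eq,
      Finset.sum_eq_zero_iff_of_nonneg fun s _ => mul_nonneg (hw s) (hf _), not_forall,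
      mul_eq_zero, not_or, exists_prop]
    exact ⟨fun ⟨s, _, hs⟩ => ⟨s, hs⟩, fun ⟨s, hs⟩ => ⟨s, hA hs.1, hs⟩⟩
  refine ⟨fun i hi k hk j hj => ?_⟩
  rw [mem] at hi hk ⊢
  obtain ⟨s, hws, hfs⟩ := hi
  obtain ⟨t, hwt, hft⟩ := hk
  obtain ⟨hij, hjk⟩ := hj
  -- a shift `r` between `s` and `t` with `j - r` between `i - s` and `k - t`
  refine ⟨max (min s t) (j - max (i - s) (k - t)), hw'.uIcc_subset hws hwt ?_,
    hf'.uIcc_subset hfs hft ?_⟩ <;>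
  · rw [mem_uIcc]
    omega

def threeWeights (α β γ : ℝ) (s : ℤ) : ℝ :=
  if s = 0 then α else if s = 1 then β else if s = 2 then γ else 0

section threeWeights

variable {α β γ : ℝ}

lemma threeWeights_nonneg (hα : 0 ≤ α) (hβ : 0 ≤ β) (hγ : 0 ≤ γ) (s : ℤ) :
    0 ≤ threeWeights α β γ s := by
  unfold threeWeights
  split_ifs <;> first | assumption | exact le_rfl

lemma support_threeWeights_subset :
    support (threeWeights α β γ) ⊆ ({0, 1, 2} : Finset ℤ) := fun s hs => by
  simp only [mem_support, threeWeights] at hs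
  split_ifs at hs <;> simp_all

lemma ordConnected_support_threeWeights (hα : 0 ≤ α) (hγ : 0 ≤ γ) (h : α * γ ≤ β ^ 2) :
    (support (threeWeights α β γ)).OrdConnected := by
  refine ⟨fun x hx z hz y ⟨hxy, hyz⟩ => ?_⟩
  rcases eq_or_ne y x with rfl | hyx
  · exact hx
  rcases eq_or_ne y z with rfl | hyz
  · exact hz
  have hx' := support_threeWeights_subset hx
  have hz' := support_threeWeights_subset hz
  simp only [Finset.coe_insert, Finset.coe_singleton, mem_insert_iff, mem_singleton_iff]
    at hx' hz'
  obtain ⟨rfl, rfl, rfl⟩ : x = 0 ∧ y = 1 ∧ z = 2 := by omega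
  norm_num [threeWeights] at hx hz ⊢
  rintro rfl
  exact (mul_pos (hα.lt_of_ne' hx) (hγ.lt_of_ne' hz)).not_ge (by simpa using h)

end threeWeights

/-- The Pólya frequency sequences of order two. -/
structure IsLogConcaveSeq (f : ℤ → ℝ) : Prop where
  nonneg : ∀ n, 0 ≤ f n
  log_concave : ∀ n, f n * f (n + 2) ≤ f (n + 1) ^ 2
  ordConnected_support : (support f).OrdConnected

namespace IsLogConcaveSeq

variable {f : ℤ → ℝ}

lemma mul_le_mul (hf : IsLogConcaveSeq f) {a b c d : ℤ} (hab : a + 1 = b) (hbc : b ≤ c)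
    (hcd : c + 1 = d) : f a * f d ≤ f b * f c := by
  subst hab hcd
  induction c, hbc using Int.leInduction with
  | base => simpa [sq, add_assoc] using hf.log_concave a
  | succ c hac ih =>
    by_cases h0 : f a * f (c + 1 + 1) = 0
    · rw [h0]
      exact mul_nonneg (hf.nonneg _) (hf.nonneg _)
    obtain ⟨ha, hd⟩ := mul_ne_zero_iff.1 h0
    have hc : 0 < f (c + 1) := (hf.nonneg _).lt_of_ne' <|
      hf.ordConnected_support.out ha hd ⟨by omega, by omega⟩
    refine le_of_mul_le_mul_right ?_ hc
    calc f a * f (c + 1 + 1) * f (c + 1) = f a * f (c + 1) * f (c + 1 + 1) := by ring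
      _ ≤ f (a + 1) * f c * f (c + 1 + 1) := by gcongr; exact hf.nonneg _
      _ ≤ f (a + 1) * f (c + 1) ^ 2 := by
        rw [mul_assoc, add_assoc c, one_add_one_eq_two]
        exact mul_le_mul_of_nonneg_left (hf.log_concave c) (hf.nonneg _)
      _ = f (a + 1) * f (c + 1) * f (c + 1) := by ring

theorem three_term (hf : IsLogConcaveSeq f) {α β γ : ℝ} (hα : 0 ≤ α) (hβ : 0 ≤ β) (hγ : 0 ≤ γ)
    (h : α * γ ≤ β ^ 2) :
    IsLogConcaveSeq fun n => γ * f (n - 2) + β * f (n - 1) + α * f n where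
  nonneg n := add_nonneg (add_nonneg (mul_nonneg hγ (hf.nonneg _)) (mul_nonneg hβ (hf.nonneg _)))
    (mul_nonneg hα (hf.nonneg _))
  log_concave n := by
    rw [show n + 2 - 2 = n by ring, show n + 2 - 1 = n + 1 by ring,
      show n + 1 - 2 = n - 1 by ring, add_sub_cancel_right]
    have h₁ : f (n - 2) * f n ≤ f (n - 1) * f (n - 1) := hf.mul_le_mul (by ring) le_rfl (by ring)
    have h₂ : f (n - 2) * f (n + 1) ≤ f (n - 1) * f n := hf.mul_le_mul (by ring) (by omega) rfl
    have h₃ : f (n - 2) * f (n + 2) ≤ f (n - 1) * f (n + 1) :=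
      hf.mul_le_mul (by ring) (by omega) (by ring)
    have h₄ : f (n - 1) * f (n + 1) ≤ f n * f n := hf.mul_le_mul (by ring) le_rfl rfl
    have h₅ : f (n - 1) * f (n + 2) ≤ f n * f (n + 1) :=
      hf.mul_le_mul (by ring) (by omega) (by ring)
    have h₆ : f n * f (n + 2) ≤ f (n + 1) * f (n + 1) := hf.mul_le_mul rfl le_rfl (by ring)
    -- the right side minus the left side is exactly this nonnegative combination
    linarith [mul_nonneg (mul_nonneg hγ hγ) (sub_nonneg.2 h₁),
      mul_nonneg (mul_nonneg hγ hβ) (sub_nonneg.2 h₂),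
      mul_nonneg (mul_nonneg hγ hα) (sub_nonneg.2 h₃),
      mul_nonneg (sub_nonneg.2 h) (sub_nonneg.2 h₄),
      mul_nonneg (mul_nonneg hα hβ) (sub_nonneg.2 h₅),
      mul_nonneg (mul_nonneg hα hα) (sub_nonneg.2 h₆)]
  ordConnected_support := by
    convert ordConnected_support_sum_mul hf.nonneg (threeWeights_nonneg hα hβ hγ)
      hf.ordConnected_support (ordConnected_support_threeWeights hα hγ h)
      support_threeWeights_subset using 3 with n
    rw [Finset.sum_insert (by decide), Finset.sum_insert (by decide), Finset.sum_singleton]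
    simp only [threeWeights, if_true, one_ne_zero, two_ne_zero, OfNat.ofNat_ne_one, if_false,
      sub_zero]
    ring

lemma intCoeff_C {c : ℝ} (hc : 0 ≤ c) : IsLogConcaveSeq (C c).intCoeff := by
  have h : ∀ n, (C c).intCoeff n = if n = 0 then c else 0 := by
    rintro (n | n) <;> simp [intCoeff, coeff_C]
  refine ⟨fun n => ?_, fun n => ?_, ⟨fun x hx z hz y hy => ?_⟩⟩
  · rw [h]
    split_ifs <;> simp [hc]
  · simp only [h]
    split_ifs <;> first | omega | simp [sq_nonneg]
  · simp only [mem_support, h, ne_eq, ite_eq_right_iff, not_forall] at hx hz ⊢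
    obtain ⟨rfl, hc⟩ := hx
    obtain ⟨rfl, -⟩ := hz
    exact ⟨le_antisymm hy.2 hy.1, hc⟩

lemma intCoeff_quadratic_mul {p : ℝ[X]} (hp : IsLogConcaveSeq p.intCoeff) {α β γ : ℝ}
    (hα : 0 ≤ α) (hβ : 0 ≤ β) (hγ : 0 ≤ γ) (h : α * γ ≤ β ^ 2) :
    IsLogConcaveSeq ((C γ * X ^ 2 + C β * X + C α) * p).intCoeff := by
  rw [funext (Polynomial.intCoeff_quadratic_mul α β γ p)]
  exact hp.three_term hα hβ hγ h

end IsLogConcaveSeq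

lemma Complex.norm_le_neg_two_mul_re {z : ℂ} (h : 2 * π / 3 ≤ |z.arg|) : ‖z‖ ≤ -2 * z.re := by
  have hcos : Real.cos |z.arg| ≤ -(1 / 2) := by
    calc Real.cos |z.arg| ≤ Real.cos (2 * π / 3) :=
          Real.cos_le_cos_of_nonneg_of_le_pi (by positivity) (abs_arg_le_pi z) h
      _ = -(1 / 2) := by
          rw [show 2 * π / 3 = π - π / 3 by ring, Real.cos_pi_sub, Real.cos_pi_div_three]
  rw [Real.cos_abs] at hcos
  nlinarith [norm_mul_cos_arg z, norm_nonneg z]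

lemma exists_monic_factor_of_sector_nonvanishing (P : ℝ[X]) (hP : 0 < P.natDegree)
    (hnv : ∀ z : ℂ, z ≠ 0 → |z.arg| < 2 * π / 3 → aeval z P ≠ 0) :
    ∃ K Q : ℝ[X], P = K * Q ∧ K.Monic ∧ 0 < K.natDegree ∧
      ∀ g : ℝ[X], IsLogConcaveSeq g.intCoeff → IsLogConcaveSeq (K * g).intCoeff := by
  obtain ⟨z, hz⟩ := IsAlgClosed.exists_aeval_eq_zero ℂ P (natDegree_pos_iff_degree_pos.1 hP).ne'
  have hre : ‖z‖ ≤ -2 * z.re := by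
    rcases eq_or_ne z 0 with rfl | hz0
    · simp
    exact Complex.norm_le_neg_two_mul_re (not_lt.1 fun h => hnv z hz0 h hz)
  have hre' : 0 ≤ -2 * z.re := (norm_nonneg z).trans hre
  by_cases him : z.im = 0
  · have hroot : P.IsRoot z.re := by
      have hz' : z = (z.re : ℂ) := Complex.ext rfl (by simp [him])
      rw [hz', ← Complex.coe_algebraMap, aeval_algebraMap_apply_eq_algebraMap_eval] at hz
      simpa using hz
    refine ⟨X - C z.re, P /ₘ (X - C z.re), (mul_divByMonic_eq_iff_isRoot.2 hroot).symm,
      monic_X_sub_C _, by simp, fun g hg => ?_⟩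
    have hK : X - C z.re = C 0 * X ^ 2 + C 1 * X + C (-z.re) := by simp [sub_eq_add_neg]
    rw [hK]
    exact hg.intCoeff_quadratic_mul (by linarith) zero_le_one le_rfl (by simp)
  · obtain ⟨Q, hQ⟩ := P.quadratic_dvd_of_aeval_eq_zero_im_ne_zero hz him
    have hdeg : (X ^ 2 - C (2 * z.re) * X + C (‖z‖ ^ 2)).natDegree = 2 := by compute_degree!
    refine ⟨_, Q, hQ, by monicity!, by rw [hdeg]; norm_num, fun g hg => ?_⟩
    have hK : X ^ 2 - C (2 * z.re) * X + C (‖z‖ ^ 2) =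
        C 1 * X ^ 2 + C (-2 * z.re) * X + C (‖z‖ ^ 2) := by simp [sub_eq_add_neg]
    rw [hK]
    exact hg.intCoeff_quadratic_mul (by positivity) hre' zero_le_one
      (by nlinarith [norm_nonneg z])

theorem isLogConcaveSeq_intCoeff_of_sector_nonvanishing (P : ℝ[X]) (hP : 0 ≤ P.leadingCoeff)
    (hnv : ∀ z : ℂ, z ≠ 0 → |z.arg| < 2 * π / 3 → aeval z P ≠ 0) :
    IsLogConcaveSeq P.intCoeff := by
  induction hn : P.natDegree using Nat.strong_induction_on generalizing P with
  | _ n ih =>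
  rcases Nat.eq_zero_or_pos n with rfl | hpos
  · rw [eq_C_of_natDegree_eq_zero hn]
    exact .intCoeff_C (by rwa [leadingCoeff, hn] at hP)
  obtain ⟨K, Q, rfl, hK, hKdeg, hKmul⟩ :=
    exists_monic_factor_of_sector_nonvanishing P (hn ▸ hpos) hnv
  have hQ : Q ≠ 0 := right_ne_zero_of_mul (ne_zero_of_natDegree_gt (hn ▸ hpos))
  refine hKmul Q (ih Q.natDegree ?_ Q ?_ ?_ rfl)
  · rw [← hn, hK.natDegree_mul' hQ]
    omega
  · rwa [leadingCoeff_mul, hK.leadingCoeff, one_mul] at hP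
  · exact fun z hz harg hQz => hnv z hz harg (by rw [map_mul, hQz, mul_zero])

/-- "Folklore" of Example 4.6: a real polynomial with nonnegative coefficients
that is nonvanishing on the open sector `{z ≠ 0 : |arg z| < 2π/3}` has a
logarithmically concave coefficient sequence with no internal zeros. -/
theorem log_concave_of_sector_nonvanishing
    (P : Polynomial ℝ) (hcoeff : ∀ j, 0 ≤ P.coeff j)
    (hnv : ∀ z : ℂ, z ≠ 0 → |z.arg| < 2 * π / 3 → Polynomial.aeval z P ≠ 0) :
    (∀ j : ℕ, P.coeff j * P.coeff (j + 2) ≤ P.coeff (j + 1) ^ 2) ∧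
      (∀ i j k : ℕ, i ≤ j → j ≤ k → P.coeff i ≠ 0 → P.coeff k ≠ 0 →
        P.coeff j ≠ 0) := by
  have hP := isLogConcaveSeq_intCoeff_of_sector_nonvanishing P (hcoeff _) hnv
  exact ⟨fun j => hP.log_concave j, fun i j k hij hjk hi hk =>
    hP.ordConnected_support.out hi hk (show (j : ℤ) ∈ Icc (i : ℤ) k by simp [hij, hjk])⟩
end

section
/- Let k ≥ 1, d = 2k, and let u > 0 be a real number with 4u ≥ C(2k,k)². Then every complex zero of K(z) = 1 + C(2k,k) z^k + u z^{2k} has modulus exactly u^{−1/(2k)}. -/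
/-!
With `w = z ^ k` and `c = C(2k,k)`, `w` is a root of the real quadratic `u w² + c w + 1`, whose
discriminant `c² - 4u` is non-positive. Its roots are then a conjugate pair or a double real root,
so `|w|² = 1 / u`, i.e. `|z| ^ (2k) = 1 / u`.
-/

open Complex

/-- A root `w = x + iy` satisfies `y (2ax + b) = 0`; if `y = 0` the discriminant bound forces
`2ax + b = 0` as well, and `2ax + b = 0` turns the real part of the equation into `a |w|² = c`. -/
theorem Complex.normSq_eq_div_of_quadratic_eq_zero {a b c : ℝ} (ha : a ≠ 0)
    (hdisc : b ^ 2 ≤ 4 * a * c) {w : ℂ} (hw : (a : ℂ) * w ^ 2 + b * w + c = 0) :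
    normSq w = c / a := by
  obtain ⟨hre, him⟩ := Complex.ext_iff.mp hw
  simp only [add_re, add_im, mul_re, mul_im, ofReal_re, ofReal_im, sq, zero_re, zero_im,
    zero_mul, sub_zero, add_zero] at hre him
  have hvertex : 2 * a * w.re + b = 0 := by
    rcases mul_eq_zero.mp (show w.im * (2 * a * w.re + b) = 0 by linear_combination him)
      with him0 | hvertex
    · rw [him0] at hre
      have hsq : (2 * a * w.re + b) ^ 2 = b ^ 2 - 4 * a * c := by linear_combination 4 * a * hre
      exact pow_eq_zero_iff two_ne_zero |>.mp (le_antisymm (by linarith) (sq_nonneg _))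
    · exact hvertex
  rw [normSq_apply, eq_div_iff ha]
  linear_combination (-1 : ℝ) * hre + w.re * hvertex

/-- Example 4.8: if `4u ≥ C(2k,k)²`, every zero of
`1 + C(2k,k) z^k + u z^{2k}` has modulus `u^{-1/(2k)}`. -/
theorem key_zeros_modulus
    (k : ℕ) (hk : 1 ≤ k) (u : ℝ) (hu : 0 < u)
    (h4u : ((2 * k).choose k : ℝ) ^ 2 ≤ 4 * u)
    (z : ℂ)
    (hz : 1 + ((2 * k).choose k : ℂ) * z ^ k + (u : ℂ) * z ^ (2 * k) = 0) :
    ‖z‖ = u ^ (-(1 : ℝ) / (2 * (k : ℝ))) := by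
  have hroot : (u : ℂ) * (z ^ k) ^ 2 + (((2 * k).choose k : ℝ) : ℂ) * z ^ k + (1 : ℝ) = 0 := by
    rw [← pow_mul, mul_comm k 2]
    push_cast
    linear_combination hz
  have hnormSq := normSq_eq_div_of_quadratic_eq_zero hu.ne' (by linarith) hroot
  have hpow : ‖z‖ ^ (2 * k) = u⁻¹ := by
    rw [pow_mul', ← norm_pow, ← normSq_eq_norm_sq, hnormSq, one_div]
  have h2k : 2 * k ≠ 0 := by omega
  rw [← Real.pow_rpow_inv_natCast (norm_nonneg z) h2k, hpow, ← Real.rpow_neg_one,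
    ← Real.rpow_mul hu.le]
  push_cast
  ring_nf
end
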